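/- arXiv:1911.12568 — 3 statements merged into one kernel-verified Lean document; each statement's English description precedes it below -/
import Mathlib

section
/- There exists an absolute constant c > 0 such that for every positive integer s and every pair of reals 0 < a < b, there exist probability measures P and Q supported on [a,b] whose first s moments agree (∫ x^j dP(x) = ∫ x^j dQ(x) for j = 1,…,s) and such that | ∫ |x − (a+b)/2| dP(x) − ∫ |x − (a+b)/2| dQ(x) | ≥ c·(b−a)/s. -/
open MeasureTheory

open Real intervalIntegral Finset
open scoped NNReal ENNReal


lemma int_cos_full (q : ℕ) (hq : 1 ≤ q) : ∫ u in (-π)..π, Real.cos (q*u) = 0 := by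
  have hm : (q:ℝ) ≠ 0 := by positivity
  rw [intervalIntegral.integral_comp_mul_left (fun x => Real.cos x) hm]
  have h1 : Real.sin ((q:ℝ)*π) = 0 := Real.sin_nat_mul_pi q
  have h2 : Real.sin ((q:ℝ)*(-π)) = 0 := by rw [mul_neg, Real.sin_neg, h1, neg_zero]
  simp [integral_cos, h1, h2]

lemma int_sin_full (q : ℕ) : ∫ u in (-π)..π, Real.sin (q*u) = 0 := by
  rcases Nat.eq_zero_or_pos q with h | h
  · simp [h]
  have hm : (q:ℝ) ≠ 0 := by positivity
  have h2 : Real.cos ((q:ℝ)*(-π)) = Real.cos ((q:ℝ)*π) := by rw [mul_neg, Real.cos_neg]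
  rw [intervalIntegral.integral_comp_mul_left (fun x => Real.sin x) hm]
  simp [integral_sin, h2]

lemma intble {f : ℝ → ℝ} (hf : Continuous f) (a b : ℝ) : IntervalIntegrable f MeasureTheory.volume a b :=
  hf.intervalIntegrable a b

lemma sin_mul_cos' (x y : ℝ) : Real.sin x * Real.cos y = (Real.sin (y+x) - Real.sin (y-x))/2 := by
  rw [Real.sin_add, Real.sin_sub]; ring

lemma sin_mul_sin' (x y : ℝ) : Real.sin x * Real.sin y = (Real.cos (y-x) - Real.cos (y+x))/2 := by
  rw [Real.cos_add, Real.cos_sub]; ring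

lemma ortho : ∀ i q : ℕ, i < q →
    ((∫ u in (-π)..π, (Real.sin u)^i * Real.cos (q*u)) = 0 ∧
     (∫ u in (-π)..π, (Real.sin u)^i * Real.sin (q*u)) = 0) := by
  intro i
  induction i with
  | zero => intro q hq; simpa using ⟨int_cos_full q hq, int_sin_full q⟩
  | succ i ih =>
    intro q hq
    have hq1 : i < q - 1 := by omega
    have hq2 : i < q + 1 := by omega
    have e1 : ∀ u : ℝ, ((q:ℝ)*u + u) = ((q+1:ℕ):ℝ)*u := by intro u; push_cast; ring
    have e2 : ∀ u : ℝ, ((q:ℝ)*u - u) = ((q-1:ℕ):ℝ)*u := by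
      intro u
      have h1 : 1 ≤ q := by omega
      push_cast [h1]; ring
    constructor
    · have key : ∀ u : ℝ, (Real.sin u)^(i+1) * Real.cos ((q:ℝ)*u)
          = ((Real.sin u)^i * Real.sin (((q+1:ℕ):ℝ)*u) - (Real.sin u)^i * Real.sin (((q-1:ℕ):ℝ)*u))/2 := by
        intro u
        have : (Real.sin u)^(i+1) * Real.cos ((q:ℝ)*u)
            = (Real.sin u)^i * (Real.sin u * Real.cos ((q:ℝ)*u)) := by ring
        rw [this, sin_mul_cos', e1 u, e2 u]; ring
      simp_rw [key]
      rw [intervalIntegral.integral_div, intervalIntegral.integral_sub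
        (intble (by fun_prop) _ _) (intble (by fun_prop) _ _),
        (ih _ hq2).2, (ih _ hq1).2]
      norm_num
    · have key : ∀ u : ℝ, (Real.sin u)^(i+1) * Real.sin ((q:ℝ)*u)
          = ((Real.sin u)^i * Real.cos (((q-1:ℕ):ℝ)*u) - (Real.sin u)^i * Real.cos (((q+1:ℕ):ℝ)*u))/2 := by
        intro u
        have : (Real.sin u)^(i+1) * Real.sin ((q:ℝ)*u)
            = (Real.sin u)^i * (Real.sin u * Real.sin ((q:ℝ)*u)) := by ring
        rw [this, sin_mul_sin', e1 u, e2 u]; ring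
      simp_rw [key]
      rw [intervalIntegral.integral_div, intervalIntegral.integral_sub
        (intble (by fun_prop) _ _) (intble (by fun_prop) _ _),
        (ih _ hq1).1, (ih _ hq2).1]
      norm_num

lemma int_sin_mu (m : ℕ) : ∫ u in (0:ℝ)..π, Real.sin (m*u) = (1 - Real.cos (m*π))/m := by
  rcases Nat.eq_zero_or_pos m with h | h
  · simp [h]
  have hm : (m:ℝ) ≠ 0 := by positivity
  rw [intervalIntegral.integral_comp_mul_left (fun x => Real.sin x) hm]
  simp [integral_sin, mul_zero, Real.cos_zero]
  field_simp

lemma A_eval (q : ℕ) (hq : 2 ≤ q) :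
    ∫ u in (-π)..π, |Real.sin u| * Real.cos (q*u)
      = -2*(1 + Real.cos (q*π))/((q:ℝ)^2 - 1) := by
  have hq1 : (1:ℝ) ≤ q := by exact_mod_cast Nat.one_le_of_lt hq
  -- half integral
  have half : ∫ u in (0:ℝ)..π, Real.sin u * Real.cos (q*u)
      = -(1 + Real.cos (q*π))/((q:ℝ)^2 - 1) := by
    have key : ∀ u : ℝ, Real.sin u * Real.cos ((q:ℝ)*u)
        = (Real.sin (((q+1:ℕ):ℝ)*u) - Real.sin (((q-1:ℕ):ℝ)*u))/2 := by
      intro u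
      rw [sin_mul_cos']
      have e1 : ((q:ℝ)*u + u) = ((q+1:ℕ):ℝ)*u := by push_cast; ring
      have e2 : ((q:ℝ)*u - u) = ((q-1:ℕ):ℝ)*u := by
        have h1 : 1 ≤ q := by omega
        push_cast [h1]; ring
      rw [e1, e2]
    simp_rw [key]
    rw [intervalIntegral.integral_div, intervalIntegral.integral_sub
      (intble (by fun_prop) _ _) (intble (by fun_prop) _ _), int_sin_mu, int_sin_mu]
    have c1 : Real.cos (((q+1:ℕ):ℝ)*π) = -Real.cos ((q:ℝ)*π) := by
      push_cast
      rw [add_mul, one_mul, Real.cos_add_pi]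
    have c2 : Real.cos (((q-1:ℕ):ℝ)*π) = -Real.cos ((q:ℝ)*π) := by
      have h1 : 1 ≤ q := by omega
      push_cast [h1]
      rw [sub_mul, one_mul, Real.cos_sub_pi]
    rw [c1, c2]
    have hca : ((q+1:ℕ):ℝ) = (q:ℝ)+1 := by push_cast; ring
    have hcb : ((q-1:ℕ):ℝ) = (q:ℝ)-1 := by
      have h1 : 1 ≤ q := by omega
      rw [Nat.cast_sub h1]; norm_num
    rw [hca, hcb]
    have h2 : (q:ℝ) + 1 ≠ 0 := by nlinarith
    have hq2 : (2:ℝ) ≤ (q:ℝ) := by exact_mod_cast hq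
    have h3 : (q:ℝ) - 1 ≠ 0 := by nlinarith
    have h4 : (q:ℝ)^2 - 1 ≠ 0 := by nlinarith
    field_simp
    ring
  -- symmetry
  have sym : ∫ u in (-π)..(0:ℝ), |Real.sin u| * Real.cos (q*u)
      = ∫ u in (0:ℝ)..π, |Real.sin u| * Real.cos (q*u) := by
    have := intervalIntegral.integral_comp_neg (a := (0:ℝ)) (b := π)
      (fun u => |Real.sin u| * Real.cos (q*u))
    simp only [neg_zero] at this
    rw [← this]
    apply intervalIntegral.integral_congr
    intro u _
    simp [Real.sin_neg, abs_neg, mul_neg, Real.cos_neg]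
  have absint : ∫ u in (0:ℝ)..π, |Real.sin u| * Real.cos (q*u)
      = ∫ u in (0:ℝ)..π, Real.sin u * Real.cos (q*u) := by
    apply intervalIntegral.integral_congr
    intro u hu
    rw [Set.uIcc_of_le Real.pi_nonneg] at hu
    dsimp only
    rw [abs_of_nonneg (Real.sin_nonneg_of_nonneg_of_le_pi hu.1 hu.2)]
  have split := intervalIntegral.integral_add_adjacent_intervals
    (a := -π) (b := 0) (c := π) (f := fun u => |Real.sin u| * Real.cos (q*u))
    (intble (by fun_prop) _ _) (intble (by fun_prop) _ _)
  rw [← split, sym, absint, half]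
  ring

noncomputable def gfun (N : ℕ) (u : ℝ) : ℝ :=
  Real.cos (2*N*u) * ((∑ k ∈ range N, Real.cos (k*u))^2 + (∑ k ∈ range N, Real.sin (k*u))^2)

lemma gfun_cont (N : ℕ) : Continuous (gfun N) := by
  unfold gfun
  apply Continuous.mul (by fun_prop)
  apply Continuous.add
  · exact (continuous_finset_sum _ (fun l _ => by fun_prop)).pow 2
  · exact (continuous_finset_sum _ (fun l _ => by fun_prop)).pow 2

lemma cast_dist_aux (N k l : ℕ) (hk : k < N) (hl : l < N) :
    ((2*N - Nat.dist k l : ℕ) : ℝ) = 2*(N:ℝ) - (Nat.dist k l : ℝ) := by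
  have h : Nat.dist k l ≤ 2*N := by simp [Nat.dist]; omega
  push_cast [Nat.cast_sub h]
  ring

lemma gfun_expand (N : ℕ) (u : ℝ) :
    gfun N u = ∑ k ∈ range N, ∑ l ∈ range N,
      (Real.cos (((2*N + Nat.dist k l : ℕ):ℝ)*u) + Real.cos (((2*N - Nat.dist k l : ℕ):ℝ)*u))/2 := by
  unfold gfun
  have expand : (∑ k ∈ range N, Real.cos (k*u))^2 + (∑ k ∈ range N, Real.sin (k*u))^2
      = ∑ k ∈ range N, ∑ l ∈ range N, Real.cos ((Nat.dist k l : ℝ)*u) := by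
    rw [sq, sq, Finset.sum_mul_sum, Finset.sum_mul_sum, ← Finset.sum_add_distrib]
    apply Finset.sum_congr rfl
    intro k hk
    rw [← Finset.sum_add_distrib]
    apply Finset.sum_congr rfl
    intro l hl
    rw [← Real.cos_sub]
    rcases le_total l k with h | h
    · have : (k:ℝ)*u - l*u = ((k - l : ℕ):ℝ)*u := by
        rw [Nat.cast_sub h]; ring
      rw [this, Nat.dist_eq_sub_of_le_right h]
    · have : (k:ℝ)*u - l*u = -(((l - k : ℕ):ℝ)*u) := by
        rw [Nat.cast_sub h]; ring
      rw [this, Real.cos_neg, Nat.dist_eq_sub_of_le h]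
  rw [expand, Finset.mul_sum]
  apply Finset.sum_congr rfl
  intro k hk
  rw [Finset.mul_sum]
  apply Finset.sum_congr rfl
  intro l hl
  have hk' := Finset.mem_range.mp hk
  have hl' := Finset.mem_range.mp hl
  rw [cast_dist_aux N k l hk' hl']
  push_cast
  have e1 : (2*(N:ℝ) + Nat.dist k l)*u = 2*N*u + (Nat.dist k l : ℝ)*u := by ring
  have e2 : (2*(N:ℝ) - Nat.dist k l)*u = 2*N*u - (Nat.dist k l : ℝ)*u := by ring
  rw [e1, e2, Real.cos_add, Real.cos_sub]
  ring
lemma dist_lt {N k l : ℕ} (hk : k < N) (hl : l < N) : Nat.dist k l < N := by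
  simp [Nat.dist]; omega

lemma g_moment (N t : ℕ) (hN : 1 ≤ N) (ht : t ≤ N) :
    ∫ u in (-π)..π, (Real.sin u)^t * gfun N u = 0 := by
  have key : ∀ u : ℝ, (Real.sin u)^t * gfun N u
      = ∑ k ∈ range N, ∑ l ∈ range N,
        ((Real.sin u)^t * Real.cos (((2*N + Nat.dist k l : ℕ):ℝ)*u)
          + (Real.sin u)^t * Real.cos (((2*N - Nat.dist k l : ℕ):ℝ)*u))/2 := by
    intro u
    rw [gfun_expand, Finset.mul_sum]
    apply Finset.sum_congr rfl; intro k _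
    rw [Finset.mul_sum]
    apply Finset.sum_congr rfl; intro l _
    ring
  simp_rw [key]
  rw [intervalIntegral.integral_finset_sum]
  swap
  · intro k _
    apply intble
    exact continuous_finset_sum _ (fun l _ => by fun_prop)
  apply Finset.sum_eq_zero
  intro k hk
  rw [intervalIntegral.integral_finset_sum]
  swap
  · intro l _
    apply intble (by fun_prop)
  apply Finset.sum_eq_zero
  intro l hl
  have hd := dist_lt (Finset.mem_range.mp hk) (Finset.mem_range.mp hl)
  have h1 : t < 2*N + Nat.dist k l := by omega
  have h2 : t < 2*N - Nat.dist k l := by omega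
  rw [intervalIntegral.integral_div, intervalIntegral.integral_add
    (intble (by fun_prop) _ _) (intble (by fun_prop) _ _),
    (ortho t _ h1).1, (ortho t _ h2).1]
  norm_num

lemma g_total_bound (N : ℕ) (hN : 1 ≤ N) :
    ∫ u in (-π)..π, |gfun N u| ≤ 2*π*N := by
  have hb : ∀ u : ℝ, |gfun N u| ≤ (∑ k ∈ range N, Real.cos (k*u))^2 + (∑ k ∈ range N, Real.sin (k*u))^2 := by
    intro u
    unfold gfun
    rw [abs_mul]
    have h1 : |Real.cos (2*N*u)| ≤ 1 := Real.abs_cos_le_one _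
    have h2 : (0:ℝ) ≤ (∑ k ∈ range N, Real.cos (k*u))^2 + (∑ k ∈ range N, Real.sin (k*u))^2 := by positivity
    calc |Real.cos (2*N*u)| * |(∑ k ∈ range N, Real.cos (k*u))^2 + (∑ k ∈ range N, Real.sin (k*u))^2|
        = |Real.cos (2*N*u)| * ((∑ k ∈ range N, Real.cos (k*u))^2 + (∑ k ∈ range N, Real.sin (k*u))^2) := by
          rw [abs_of_nonneg h2]
      _ ≤ 1 * ((∑ k ∈ range N, Real.cos (k*u))^2 + (∑ k ∈ range N, Real.sin (k*u))^2) := by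
          apply mul_le_mul_of_nonneg_right h1 h2
      _ = _ := one_mul _
  have hFint : ∫ u in (-π)..π, ((∑ k ∈ range N, Real.cos (k*u))^2 + (∑ k ∈ range N, Real.sin (k*u))^2) = 2*π*N := by
    have expand : ∀ u:ℝ, (∑ k ∈ range N, Real.cos (k*u))^2 + (∑ k ∈ range N, Real.sin (k*u))^2
        = ∑ k ∈ range N, ∑ l ∈ range N, Real.cos ((Nat.dist k l : ℝ)*u) := by
      intro u
      rw [sq, sq, Finset.sum_mul_sum, Finset.sum_mul_sum, ← Finset.sum_add_distrib]
      apply Finset.sum_congr rfl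
      intro k hk
      rw [← Finset.sum_add_distrib]
      apply Finset.sum_congr rfl
      intro l hl
      rw [← Real.cos_sub]
      rcases le_total l k with h | h
      · have : (k:ℝ)*u - l*u = ((k - l : ℕ):ℝ)*u := by rw [Nat.cast_sub h]; ring
        rw [this, Nat.dist_eq_sub_of_le_right h]
      · have : (k:ℝ)*u - l*u = -(((l - k : ℕ):ℝ)*u) := by rw [Nat.cast_sub h]; ring
        rw [this, Real.cos_neg, Nat.dist_eq_sub_of_le h]
    simp_rw [expand]
    rw [intervalIntegral.integral_finset_sum]
    swap
    · intro k _; exact intble (continuous_finset_sum _ (fun l _ => by fun_prop)) _ _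
    have inner : ∀ k ∈ range N, (∫ u in (-π)..π, ∑ l ∈ range N, Real.cos ((Nat.dist k l : ℝ)*u)) = 2*π := by
      intro k hk
      rw [intervalIntegral.integral_finset_sum (fun l _ => intble (by fun_prop) _ _)]
      have : ∀ l ∈ range N, (∫ u in (-π)..π, Real.cos ((Nat.dist k l : ℝ)*u))
          = if l = k then 2*π else 0 := by
        intro l hl
        rcases eq_or_ne l k with h | h
        · subst h; simp [Nat.dist_self, Real.cos_zero]; ring
        · rw [if_neg h]
          apply int_cos_full
          have : Nat.dist k l ≠ 0 := by
            simp [Nat.dist]; omega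
          omega
      rw [Finset.sum_congr rfl this, Finset.sum_ite_eq' (range N) k (fun _ => 2*π)]
      simp [Finset.mem_range.mpr (Finset.mem_range.mp hk)]
    rw [Finset.sum_congr rfl inner, Finset.sum_const, Finset.card_range, nsmul_eq_mul]
    ring
  calc ∫ u in (-π)..π, |gfun N u|
      ≤ ∫ u in (-π)..π, ((∑ k ∈ range N, Real.cos (k*u))^2 + (∑ k ∈ range N, Real.sin (k*u))^2) := by
        apply intervalIntegral.integral_mono_on (le_of_lt (by linarith [Real.pi_pos]))
          (intble (gfun_cont N).abs _ _)
          (intble (by exact Continuous.add ((continuous_finset_sum _ (fun l _ => by fun_prop)).pow 2) ((continuous_finset_sum _ (fun l _ => by fun_prop)).pow 2)) _ _)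
        intro u _; exact hb u
    _ = 2*π*N := hFint
set_option maxHeartbeats 2000000 in
lemma I_bound (N : ℕ) (hN : 1 ≤ N) :
    ∫ u in (-π)..π, |Real.sin u| * gfun N u ≤ -(1/9) := by
  set T : ℕ × ℕ → ℝ := fun p =>
    ((-2*(1 + Real.cos (((2*N + Nat.dist p.1 p.2 : ℕ):ℝ)*π))/(((2*N + Nat.dist p.1 p.2 : ℕ):ℝ)^2 - 1))
     + (-2*(1 + Real.cos (((2*N - Nat.dist p.1 p.2 : ℕ):ℝ)*π))/(((2*N - Nat.dist p.1 p.2 : ℕ):ℝ)^2 - 1)))/2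
    with hT
  have q1ge : ∀ k l : ℕ, 2 ≤ 2*N + Nat.dist k l := by intro k l; omega
  have q2ge : ∀ k l : ℕ, k < N → l < N → 2 ≤ 2*N - Nat.dist k l := by
    intro k l hk hl; have := dist_lt hk hl; omega
  -- expansion of the integral
  have Iexp : ∫ u in (-π)..π, |Real.sin u| * gfun N u
      = ∑ p ∈ (range N) ×ˢ (range N), T p := by
    have key : ∀ u : ℝ, |Real.sin u| * gfun N u
        = ∑ k ∈ range N, ∑ l ∈ range N,
          (|Real.sin u| * Real.cos (((2*N + Nat.dist k l : ℕ):ℝ)*u)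
            + |Real.sin u| * Real.cos (((2*N - Nat.dist k l : ℕ):ℝ)*u))/2 := by
      intro u
      rw [gfun_expand, Finset.mul_sum]
      apply Finset.sum_congr rfl; intro k _
      rw [Finset.mul_sum]
      apply Finset.sum_congr rfl; intro l _
      ring
    simp_rw [key]
    rw [intervalIntegral.integral_finset_sum]
    swap
    · intro k _
      exact intble (continuous_finset_sum _ (fun l _ => by fun_prop)) _ _
    rw [Finset.sum_product]
    apply Finset.sum_congr rfl
    intro k hk
    rw [intervalIntegral.integral_finset_sum (fun l _ => intble (by fun_prop) _ _)]
    apply Finset.sum_congr rfl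
    intro l hl
    rw [intervalIntegral.integral_div, intervalIntegral.integral_add
      (intble (by fun_prop) _ _) (intble (by fun_prop) _ _),
      A_eval _ (q1ge k l), A_eval _ (q2ge k l (Finset.mem_range.mp hk) (Finset.mem_range.mp hl))]
  rw [Iexp]
  -- each term nonpositive
  have Tnonpos : ∀ p : ℕ × ℕ, p ∈ (range N) ×ˢ (range N) → T p ≤ 0 := by
    intro p hp
    rw [Finset.mem_product] at hp
    have h1 := q1ge p.1 p.2
    have h2 := q2ge p.1 p.2 (Finset.mem_range.mp hp.1) (Finset.mem_range.mp hp.2)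
    have aux : ∀ q : ℕ, 2 ≤ q → -2*(1 + Real.cos ((q:ℝ)*π))/((q:ℝ)^2 - 1) ≤ 0 := by
      intro q hq
      have hc : (0:ℝ) ≤ 1 + Real.cos ((q:ℝ)*π) := by nlinarith [Real.neg_one_le_cos ((q:ℝ)*π)]
      have hq' : (2:ℝ) ≤ (q:ℝ) := by exact_mod_cast hq
      have hd : (0:ℝ) < (q:ℝ)^2 - 1 := by nlinarith
      apply div_nonpos_of_nonpos_of_nonneg <;> nlinarith
    have := aux _ h1
    have := aux _ h2
    rw [hT]
    dsimp only
    linarith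
  -- the even subset
  set K : ℕ := (N+1)/2 with hK
  set E : Finset ℕ := (range K).image (fun i => 2*i) with hE
  have hEsub : E ×ˢ E ⊆ (range N) ×ˢ (range N) := by
    apply Finset.product_subset_product <;>
    · intro x hx
      rw [hE, Finset.mem_image] at hx
      obtain ⟨i, hi, rfl⟩ := hx
      rw [Finset.mem_range] at hi ⊢
      omega
  have step1 : ∑ p ∈ (range N) ×ˢ (range N), T p ≤ ∑ p ∈ E ×ˢ E, T p := by
    have := Finset.sum_le_sum_of_subset_of_nonneg (f := fun p => -T p) hEsub
      (fun p hp _ => neg_nonneg.mpr (Tnonpos p hp))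
    have h2 : ∑ p ∈ E ×ˢ E, (-T p) ≤ ∑ p ∈ (range N) ×ˢ (range N), (-T p) := this
    rw [Finset.sum_neg_distrib, Finset.sum_neg_distrib] at h2
    linarith
  -- bound each term on E
  have Tbound : ∀ p : ℕ × ℕ, p ∈ E ×ˢ E → T p ≤ -(4/(9*(N:ℝ)^2)) := by
    intro p hp
    rw [Finset.mem_product] at hp
    obtain ⟨hp1, hp2⟩ := hp
    rw [hE, Finset.mem_image] at hp1 hp2
    obtain ⟨i, hi, hpi⟩ := hp1
    obtain ⟨j, hj, hpj⟩ := hp2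
    rw [Finset.mem_range] at hi hj
    have hk : p.1 < N := by omega
    have hl : p.2 < N := by omega
    have hdist2 : Nat.dist p.1 p.2 = 2 * Nat.dist i j := by
      simp [Nat.dist]; omega
    have hdist : Even (Nat.dist p.1 p.2) := by
      rw [hdist2]; exact even_two_mul _
    have hdlt := dist_lt hk hl
    have aux : ∀ q : ℕ, 2 ≤ q → q ≤ 3*N → Even q →
        -2*(1 + Real.cos ((q:ℝ)*π))/((q:ℝ)^2 - 1) ≤ -(4/(9*(N:ℝ)^2)) := by
      intro q hq hq3 hqe
      obtain ⟨m, hm⟩ := hqe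
      have hcos : Real.cos ((q:ℝ)*π) = 1 := by
        have : (q:ℝ)*π = m*(2*π) := by
          have : (q:ℝ) = 2*m := by exact_mod_cast (by omega : q = 2*m)
          rw [this]; ring
        rw [this, Real.cos_nat_mul_two_pi]
      rw [hcos]
      have hq' : (2:ℝ) ≤ (q:ℝ) := by exact_mod_cast hq
      have hq3' : (q:ℝ) ≤ 3*N := by exact_mod_cast hq3
      have hN' : (1:ℝ) ≤ (N:ℝ) := by exact_mod_cast hN
      have hd : (0:ℝ) < (q:ℝ)^2 - 1 := by nlinarith
      have hd2 : (q:ℝ)^2 - 1 ≤ 9*(N:ℝ)^2 := by nlinarith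
      rw [div_le_iff₀ hd]
      have h9 : (0:ℝ) < 9*(N:ℝ)^2 := by positivity
      have : (4/(9*(N:ℝ)^2)) * ((q:ℝ)^2-1) ≤ 4 := by
        rw [div_mul_eq_mul_div, div_le_iff₀ h9]; nlinarith
      nlinarith
    obtain ⟨m, hm⟩ := hdist
    have b1 := aux _ (q1ge p.1 p.2) (by omega) (⟨N+m, by omega⟩ : Even (2*N + Nat.dist p.1 p.2))
    have b2 := aux _ (q2ge p.1 p.2 hk hl) (by omega) (⟨N-m, by omega⟩ : Even (2*N - Nat.dist p.1 p.2))
    rw [hT]; dsimp only; linarith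
  have step2 : ∑ p ∈ E ×ˢ E, T p ≤ -(1/9) := by
    have cardE : E.card = K := by
      rw [hE, Finset.card_image_of_injective _ (fun x y h => by omega), Finset.card_range]
    have hKN : (N:ℝ) ≤ 2*(K:ℝ) := by
      have : N ≤ 2*K := by omega
      exact_mod_cast this
    have hN' : (1:ℝ) ≤ (N:ℝ) := by exact_mod_cast hN
    calc ∑ p ∈ E ×ˢ E, T p ≤ ∑ p ∈ E ×ˢ E, -(4/(9*(N:ℝ)^2)) := Finset.sum_le_sum Tbound
      _ = (E ×ˢ E).card * -(4/(9*(N:ℝ)^2)) := by rw [Finset.sum_const, nsmul_eq_mul]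
      _ = (K:ℝ)^2 * -(4/(9*(N:ℝ)^2)) := by
          rw [Finset.card_product, cardE]; push_cast; ring
      _ ≤ -(1/9) := by
          have h9 : (0:ℝ) < 9*(N:ℝ)^2 := by positivity
          have key : (1:ℝ)/9 ≤ (K:ℝ)^2*(4/(9*(N:ℝ)^2)) := by
            rw [mul_div_assoc', div_le_div_iff₀ (by norm_num) h9]
            nlinarith
          have e : (K:ℝ)^2*-(4/(9*(N:ℝ)^2)) = -((K:ℝ)^2*(4/(9*(N:ℝ)^2))) := by ring
          rw [e]
          linarith
  linarith
lemma ofReal_max_zero (x : ℝ) : ENNReal.ofReal (max x 0) = ENNReal.ofReal x := by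
  rcases le_total x 0 with h | h
  · rw [max_eq_right h, ENNReal.ofReal_of_nonpos h, ENNReal.ofReal_zero]
  · rw [max_eq_left h]

lemma hple : -π ≤ π := by linarith [Real.pi_pos]

lemma mass_eq (g : ℝ → ℝ) (hg : Continuous g) :
    ((MeasureTheory.volume.restrict (Set.Ioc (-π) π)).withDensity (fun u => ENNReal.ofReal (g u))) Set.univ
      = ENNReal.ofReal (∫ u in (-π)..π, max (g u) 0) := by
  rw [MeasureTheory.withDensity_apply _ MeasurableSet.univ, Measure.restrict_univ]
  rw [intervalIntegral.integral_of_le hple]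
  rw [ofReal_integral_eq_lintegral_ofReal]
  · exact lintegral_congr (fun u => (ofReal_max_zero (g u)).symm)
  · exact ((hg.max continuous_const).integrableOn_Ioc)
  · exact Filter.Eventually.of_forall (fun u => le_max_right _ _)

lemma rep_integral (g : ℝ → ℝ) (hg : Continuous g) (M : ℝ) (hM : 0 < M)
    (φ : ℝ → ℝ) (hφ : Continuous φ) (f : ℝ → ℝ) (hf : Continuous f) :
    ∫ x, f x ∂((ENNReal.ofReal M)⁻¹ • Measure.map φ
      ((MeasureTheory.volume.restrict (Set.Ioc (-π) π)).withDensity (fun u => ENNReal.ofReal (g u))))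
      = M⁻¹ * ∫ u in (-π)..π, max (g u) 0 * f (φ u) := by
  rw [MeasureTheory.integral_smul_measure]
  rw [integral_map hφ.measurable.aemeasurable hf.aestronglyMeasurable]
  have hd : (fun u => ENNReal.ofReal (g u)) = (fun u => ((Real.toNNReal (g u) : ℝ≥0) : ℝ≥0∞)) := rfl
  rw [hd, integral_withDensity_eq_integral_smul (hg.measurable.real_toNNReal)]
  have : ∀ u : ℝ, (Real.toNNReal (g u) : ℝ≥0) • f (φ u) = max (g u) 0 * f (φ u) := by
    intro u
    rw [NNReal.smul_def, Real.coe_toNNReal', smul_eq_mul]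
  simp_rw [this]
  rw [← intervalIntegral.integral_of_le hple]
  rw [ENNReal.toReal_inv, ENNReal.toReal_ofReal hM.le, smul_eq_mul]

lemma div_le_div_of_nonneg_right' {a b c : ℝ} (h : a ≤ b) (hc : 0 < c) : a / c ≤ b / c := by
  rw [div_le_div_iff₀ hc hc]
  nlinarith
noncomputable def gneg (N : ℕ) (u : ℝ) : ℝ := -(gfun N u)

lemma gneg_cont (N : ℕ) : Continuous (gneg N) := (gfun_cont N).neg


set_option maxHeartbeats 1600000 in
theorem stmt3 :
    ∃ c : ℝ, 0 < c ∧
      ∀ s : ℕ, 1 ≤ s → ∀ a b : ℝ, 0 < a → a < b →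
        ∃ P Q : Measure ℝ, IsProbabilityMeasure P ∧ IsProbabilityMeasure Q ∧
          P (Set.Icc a b) = 1 ∧ Q (Set.Icc a b) = 1 ∧
          (∀ j : ℕ, 1 ≤ j → j ≤ s → (∫ x, x ^ j ∂P) = ∫ x, x ^ j ∂Q) ∧
          c * (b - a) / s ≤
            |(∫ x, |x - (a + b) / 2| ∂P) - ∫ x, |x - (a + b) / 2| ∂Q| := by
  refine ⟨1/250, by norm_num, ?_⟩
  intro s hs a b ha hab
  set N := s + 1 with hNdef
  have hN1 : 1 ≤ N := by omega
  set m₀ := (a+b)/2 with hm₀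
  set r := (b-a)/2 with hr
  have hrpos : 0 < r := by rw [hr]; linarith
  set φ : ℝ → ℝ := fun u => m₀ + r * Real.sin u with hφdef
  have hφc : Continuous φ := by rw [hφdef]; fun_prop
  have hgc : Continuous (gfun N) := gfun_cont N
  set Mp := ∫ u in (-π)..π, max (gfun N u) 0 with hMp
  set Mq := ∫ u in (-π)..π, max (gneg N u) 0 with hMq
  set Ival := ∫ u in (-π)..π, |Real.sin u| * gfun N u with hIval
  have hIbd : Ival ≤ -(1/9) := I_bound N hN1
  have hg0 : ∫ u in (-π)..π, gfun N u = 0 := by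
    have := g_moment N 0 hN1 (by omega)
    simpa using this
  have igp : IntervalIntegrable (fun u => max (gfun N u) 0) volume (-π) π :=
    intble (hgc.max continuous_const) _ _
  have igq : IntervalIntegrable (fun u => max (gneg N u) 0) volume (-π) π :=
    intble ((gneg_cont N).max continuous_const) _ _
  have hMpq : Mq = Mp := by
    have hsub : Mp - Mq = ∫ u in (-π)..π, gfun N u := by
      rw [hMp, hMq, ← intervalIntegral.integral_sub igp igq]
      apply intervalIntegral.integral_congr
      intro u _
      simp only [gneg]
      exact max_zero_sub_max_neg_zero_eq_self (gfun N u)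
    rw [hg0] at hsub; linarith
  have habs : ∫ u in (-π)..π, |gfun N u| = Mp + Mq := by
    rw [hMp, hMq, ← intervalIntegral.integral_add igp igq]
    apply intervalIntegral.integral_congr
    intro u _
    simp only [gneg]
    rcases le_total (gfun N u) 0 with h | h
    · rw [abs_of_nonpos h, max_eq_right h, max_eq_left (by linarith)]; ring
    · rw [abs_of_nonneg h, max_eq_left h, max_eq_right (by linarith)]; ring
  have hIabs : |Ival| ≤ ∫ u in (-π)..π, |gfun N u| := by
    rw [hIval]
    calc |∫ u in (-π)..π, |Real.sin u| * gfun N u|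
        ≤ ∫ u in (-π)..π, abs (|Real.sin u| * gfun N u) :=
          intervalIntegral.abs_integral_le_integral_abs hple
      _ ≤ ∫ u in (-π)..π, |gfun N u| := by
          apply intervalIntegral.integral_mono_on hple
            (intble (by exact ((continuous_sin.abs.mul hgc)).abs) _ _)
            (intble hgc.abs _ _)
          intro u _
          rw [abs_mul, abs_abs]
          have h1 : |Real.sin u| ≤ 1 := abs_le.mpr ⟨Real.neg_one_le_sin u, Real.sin_le_one u⟩
          nlinarith [abs_nonneg (gfun N u), abs_nonneg (Real.sin u)]
  have hMppos : 0 < Mp := by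
    have : (1:ℝ)/9 ≤ |Ival| := by
      rw [abs_of_nonpos (by linarith)]
      linarith
    linarith [hIabs, habs, hMpq]
  have hMple : Mp ≤ 2*π*N := by
    have h0 : Mp + Mq ≤ 2*π*N := by rw [← habs]; exact g_total_bound N hN1
    linarith [hMpq, hMppos]
  have hs1 : (1:ℝ) ≤ (s:ℝ) := by exact_mod_cast hs
  have hspos : (0:ℝ) < (s:ℝ) := by linarith
  have hba : (0:ℝ) < b - a := by linarith
  have hne0 : ENNReal.ofReal Mp ≠ 0 := (ENNReal.ofReal_pos.mpr hMppos).ne'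
  have hnetop : ENNReal.ofReal Mp ≠ ⊤ := ENNReal.ofReal_ne_top
  have hmassP : (Measure.map φ ((MeasureTheory.volume.restrict (Set.Ioc (-π) π)).withDensity
      (fun u => ENNReal.ofReal (gfun N u)))) Set.univ = ENNReal.ofReal Mp := by
    rw [Measure.map_apply hφc.measurable MeasurableSet.univ, Set.preimage_univ,
      mass_eq (gfun N) hgc]
  have hmassQ : (Measure.map φ ((MeasureTheory.volume.restrict (Set.Ioc (-π) π)).withDensity
      (fun u => ENNReal.ofReal (gneg N u)))) Set.univ = ENNReal.ofReal Mp := by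
    rw [Measure.map_apply hφc.measurable MeasurableSet.univ, Set.preimage_univ,
      mass_eq (gneg N) (gneg_cont N), ← hMq, hMpq]
  have hpre : φ ⁻¹' (Set.Icc a b) = Set.univ := by
    apply Set.eq_univ_iff_forall.mpr
    intro u
    simp only [Set.mem_preimage, Set.mem_Icc, hφdef, hm₀, hr]
    constructor
    · nlinarith [Real.neg_one_le_sin u]
    · nlinarith [Real.sin_le_one u]
  have momzero : ∀ t : ℕ, t ≤ s → ∫ u in (-π)..π, (Real.sin u)^t * gfun N u = 0 :=
    fun t ht => g_moment N t hN1 (by omega)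
  have keyzero : ∀ j : ℕ, j ≤ s → ∫ u in (-π)..π, gfun N u * (φ u)^j = 0 := by
    intro j hj
    have expand : ∀ u:ℝ, gfun N u * (φ u)^j
        = ∑ t ∈ range (j+1), ((j.choose t : ℝ) * m₀^(j-t) * r^t) * ((Real.sin u)^t * gfun N u) := by
      intro u
      have hphi : φ u = r * Real.sin u + m₀ := by simp only [hφdef]; ring
      rw [hphi, add_pow, Finset.mul_sum]
      apply Finset.sum_congr rfl
      intro t _
      rw [mul_pow]
      ring
    simp_rw [expand]
    rw [intervalIntegral.integral_finset_sum]
    · apply Finset.sum_eq_zero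
      intro t htm
      rw [intervalIntegral.integral_const_mul,
        momzero t (Nat.le_trans (Nat.lt_succ_iff.mp (Finset.mem_range.mp htm)) hj), mul_zero]
    · intro t _
      exact intble (continuous_const.mul ((Real.continuous_sin.pow t).mul hgc)) _ _
  have gdiff : ∀ f : ℝ → ℝ, Continuous f →
      (∫ u in (-π)..π, max (gfun N u) 0 * f (φ u)) - (∫ u in (-π)..π, max (gneg N u) 0 * f (φ u))
        = ∫ u in (-π)..π, gfun N u * f (φ u) := by
    intro f hf
    rw [← intervalIntegral.integral_sub
      (intble (f := fun u => max (gfun N u) 0 * f (φ u))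
        ((hgc.max continuous_const).mul (hf.comp hφc)) _ _)
      (intble (f := fun u => max (gneg N u) 0 * f (φ u))
        (((gneg_cont N).max continuous_const).mul (hf.comp hφc)) _ _)]
    apply intervalIntegral.integral_congr
    intro u _
    dsimp only
    simp only [gneg]
    rw [← sub_mul, max_zero_sub_max_neg_zero_eq_self]
  clear_value N m₀ r φ Mp Mq Ival
  -- the measures
  refine ⟨(ENNReal.ofReal Mp)⁻¹ • Measure.map φ
      ((MeasureTheory.volume.restrict (Set.Ioc (-π) π)).withDensity (fun u => ENNReal.ofReal (gfun N u))),
    (ENNReal.ofReal Mp)⁻¹ • Measure.map φ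
      ((MeasureTheory.volume.restrict (Set.Ioc (-π) π)).withDensity (fun u => ENNReal.ofReal (gneg N u))),
    ?_, ?_, ?_, ?_, ?_, ?_⟩
  · exact ⟨by rw [Measure.smul_apply, hmassP, smul_eq_mul, ENNReal.inv_mul_cancel hne0 hnetop]⟩
  · exact ⟨by rw [Measure.smul_apply, hmassQ, smul_eq_mul, ENNReal.inv_mul_cancel hne0 hnetop]⟩
  · rw [Measure.smul_apply, Measure.map_apply hφc.measurable measurableSet_Icc, hpre,
      ← Set.preimage_univ (f := φ), ← Measure.map_apply hφc.measurable MeasurableSet.univ,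
      hmassP, smul_eq_mul, ENNReal.inv_mul_cancel hne0 hnetop]
  · rw [Measure.smul_apply, Measure.map_apply hφc.measurable measurableSet_Icc, hpre,
      ← Set.preimage_univ (f := φ), ← Measure.map_apply hφc.measurable MeasurableSet.univ,
      hmassQ, smul_eq_mul, ENNReal.inv_mul_cancel hne0 hnetop]
  · intro j _ hj
    rw [rep_integral (gfun N) hgc Mp hMppos φ hφc (fun x => x^j) (continuous_pow j),
      rep_integral (gneg N) (gneg_cont N) Mp hMppos φ hφc (fun x => x^j) (continuous_pow j)]
    have e : (∫ u in (-π)..π, max (gfun N u) 0 * (φ u)^j)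
        = ∫ u in (-π)..π, max (gneg N u) 0 * (φ u)^j := by
      have h1 := gdiff (fun x => x^j) (continuous_pow j)
      have h2 := keyzero j hj
      linarith
    exact congrArg (fun z => Mp⁻¹ * z) e
  · have hfc : Continuous (fun x : ℝ => |x - m₀|) := (continuous_id.sub continuous_const).abs
    rw [rep_integral (gfun N) hgc Mp hMppos φ hφc (fun x => |x - m₀|) hfc,
      rep_integral (gneg N) (gneg_cont N) Mp hMppos φ hφc (fun x => |x - m₀|) hfc]
    have heval : (∫ u in (-π)..π, gfun N u * |φ u - m₀|) = r * Ival := by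
      rw [hIval, ← intervalIntegral.integral_const_mul]
      apply intervalIntegral.integral_congr
      intro u _
      dsimp only
      have h1 : φ u - m₀ = r * Real.sin u := by simp only [hφdef]; ring
      rw [h1, abs_mul, abs_of_pos hrpos]
      ring
    have hdm := gdiff (fun x => |x - m₀|) hfc
    have hdiff : Mp⁻¹ * (∫ u in (-π)..π, max (gfun N u) 0 * |φ u - m₀|)
        - Mp⁻¹ * (∫ u in (-π)..π, max (gneg N u) 0 * |φ u - m₀|)
        = Mp⁻¹ * (r * Ival) := by
      rw [← mul_sub, hdm, heval]
    rw [hdiff]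
    have hneg : Mp⁻¹ * (r * Ival) ≤ 0 := by
      have h1 : r * Ival ≤ 0 := mul_nonpos_of_nonneg_of_nonpos hrpos.le (by linarith)
      have h2 : 0 ≤ Mp⁻¹ := inv_nonneg.mpr hMppos.le
      exact mul_nonpos_of_nonneg_of_nonpos h2 h1
    rw [abs_of_nonpos hneg]
    have hrew : -(Mp⁻¹ * (r * Ival)) = r * (-Ival) / Mp := by
      rw [div_eq_mul_inv]; ring
    rw [hrew]
    have hstep1 : r * (1/9) / Mp ≤ r * (-Ival) / Mp := by
      have h19 : r * (1/9) ≤ r * (-Ival) := by nlinarith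
      exact div_le_div_of_nonneg_right' h19 hMppos
    have hcast : ((N:ℕ):ℝ) = (s:ℝ) + 1 := by rw [hNdef]; push_cast; ring
    rw [hcast] at hMple
    have hMple2 : Mp ≤ (13:ℝ) * s := by
      nlinarith [mul_le_mul_of_nonneg_right Real.pi_lt_d2.le (by linarith : (0:ℝ) ≤ (s:ℝ)),
        Real.pi_lt_d2, Real.pi_pos]
    have hstep2 : 1/250 * (b-a) / s ≤ r * (1/9) / Mp := by
      rw [div_le_div_iff₀ hspos (by positivity), hr]
      nlinarith [mul_le_mul_of_nonneg_left hMple2 (show (0:ℝ) ≤ 1/250*(b-a) by positivity),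
        mul_pos hba hspos]
    linarith
end

section
/- For integers 0 ≤ m ≤ t, define C(t,m,j) = Σ_{l=0}^{j} (−1)^(m−l) · C(2m,2l) · C(t−m, j−l) / C(t,j) for j = 0,…,t (with the convention C(a,b) = 0 when b > a ≥ 0). Then √( Σ_{j=0}^{t} C(t,m,j)² ) ≤ (t+1) · e^(m²/t), and consequently |C(t,m,j)| ≤ (t+1) · e^(m²/t) for every j. -/
open Finset

/-- The coefficient of the `j`-th Bernstein basis polynomial of degree `t` in the expansion
of the shifted Chebyshev polynomial of degree `m`:
`C(t,m,j) = Σ_{l=0}^{j} (−1)^{m−l} C(2m,2l) C(t−m, j−l) / C(t,j)`.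
(Binomial coefficients vanish when the lower index exceeds the upper one.) -/
noncomputable def Ctmj (t m j : ℕ) : ℝ :=
  ∑ l ∈ Finset.range (j + 1),
    (-1 : ℝ) ^ (m - l) * (Nat.choose (2 * m) (2 * l) : ℝ) *
      (Nat.choose (t - m) (j - l) : ℝ) / (Nat.choose t j : ℝ)

open Polynomial

noncomputable def Kc (x y k : ℕ) : ℝ :=
  ∑ l ∈ Finset.range (k + 1), (-1 : ℝ) ^ l * (Nat.choose x l) * (Nat.choose y (k - l))

lemma coeff_one_sub_X_pow {R : Type*} [CommRing R] (p k : ℕ) :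
    ((1 - X : R[X]) ^ p).coeff k = (-1 : R) ^ k * p.choose k := by
  have h : ((1 : R[X]) - X) = C (-1) * (X + C (-1)) := by
    simp [mul_add, ← C_mul]; ring
  rw [h, mul_pow, ← C_pow, coeff_C_mul, coeff_X_add_C_pow]
  rcases le_or_gt k p with hk | hk
  · rw [← mul_assoc, ← pow_add, show p + (p - k) = 2 * (p - k) + k by omega,
      pow_add, pow_mul]
    norm_num
  · rw [Nat.choose_eq_zero_of_lt hk]; simp

lemma coeff_mix {R : Type*} [CommRing R] (p q a : ℕ) :
    (((1 - X) ^ p * (1 + X) ^ q : R[X])).coeff a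
      = ∑ l ∈ Finset.range (a + 1), (-1 : R) ^ l * (p.choose l) * (q.choose (a - l)) := by
  rw [coeff_mul, Finset.Nat.sum_antidiagonal_eq_sum_range_succ_mk]
  refine Finset.sum_congr rfl fun l _ => ?_
  rw [coeff_one_sub_X_pow, coeff_one_add_X_pow, mul_assoc]


lemma kc_cast (x y k : ℕ) :
    (∑ l ∈ Finset.range (k + 1),
      (-1 : Polynomial ℝ) ^ l * (Nat.choose x l) * (Nat.choose y (k - l)))
      = Polynomial.C (Kc x y k) := by
  rw [Kc, map_sum]
  refine Finset.sum_congr rfl fun l _ => ?_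
  simp [map_mul, map_pow, map_neg, map_one, map_natCast]

lemma orth (n a : ℕ) (ha : a ≤ n) :
    ∑ k ∈ Finset.range (n + 1), (n.choose k : ℝ) * (Kc k (n - k) a) ^ 2
      = 2 ^ n * n.choose a := by
  classical
  set P := Polynomial ℝ
  set PP := Polynomial P
  set Y : PP := Polynomial.C (Polynomial.X : P) with hY
  set u : PP := (1 - Polynomial.X) * Polynomial.C (1 - Polynomial.X) with hu
  set v : PP := (1 + Polynomial.X) * Polynomial.C (1 + Polynomial.X) with hv
  have hadd : (u + v) ^ n = ∑ k ∈ Finset.range (n + 1),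
      u ^ k * v ^ (n - k) * (n.choose k : PP) := Commute.add_pow (Commute.all u v) n
  have huv : (u + v) ^ n = (2:PP) ^ n * (1 + Polynomial.X * Y) ^ n := by
    rw [← mul_pow]
    congr 1
    rw [hu, hv, hY, map_sub, map_add, map_one]; ring
  have hterm : ∀ k, ((u ^ k * v ^ (n - k) * (n.choose k : PP)).coeff a).coeff a
      = (n.choose k : ℝ) * (Kc k (n - k) a) ^ 2 := by
    intro k
    have h1 : u ^ k * v ^ (n - k) * (n.choose k : PP)
        = ((1 - Polynomial.X) ^ k * (1 + Polynomial.X) ^ (n - k)) *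
          Polynomial.C (((1 - Polynomial.X) ^ k * (1 + Polynomial.X) ^ (n - k)) *
            ((n.choose k : ℕ) : P)) := by
      rw [hu, hv]
      simp only [map_mul, map_sub, map_add, map_one, mul_pow, map_pow, Polynomial.C_eq_natCast]
      ring
    rw [h1, Polynomial.coeff_mul_C, coeff_mix, kc_cast, Polynomial.coeff_C_mul,
      ← Polynomial.C_eq_natCast, Polynomial.coeff_mul_C, coeff_mix]
    have h2 : (∑ l ∈ Finset.range (a + 1),
        (-1:ℝ) ^ l * (Nat.choose k l) * (Nat.choose (n-k) (a - l))) = Kc k (n-k) a := rfl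
    rw [h2]; ring
  have hlhs : (((u + v) ^ n).coeff a).coeff a = 2 ^ n * n.choose a := by
    rw [huv]
    have hexp : ((1 : PP) + Polynomial.X * Y) ^ n
        = ∑ i ∈ Finset.range (n + 1),
            Polynomial.X ^ i * Polynomial.C ((Polynomial.X : P) ^ i * ((n.choose i : ℕ) : P)) := by
      rw [add_comm ((1:PP)) _, Commute.add_pow (Commute.all _ _) n]
      refine Finset.sum_congr rfl fun i _ => ?_
      rw [one_pow, hY]
      simp only [map_mul, map_pow, Polynomial.C_eq_natCast]
      ring
    have h2n : ((2:PP) ^ n) = Polynomial.C ((2:P) ^ n) := by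
      rw [map_pow, map_ofNat]
    rw [h2n, mul_comm, Polynomial.coeff_mul_C, hexp, Polynomial.finset_sum_coeff]
    have hite : ∀ i ∈ Finset.range (n+1),
        (Polynomial.X ^ i * Polynomial.C ((Polynomial.X : P) ^ i * ((n.choose i : ℕ) : P))).coeff a
        = if i = a then (Polynomial.X : P) ^ a * ((n.choose a : ℕ) : P) else 0 := by
      intro i _
      rw [Polynomial.coeff_mul_C, Polynomial.coeff_X_pow]
      by_cases h : i = a
      · simp [h]
      · simp only [h, if_false]
        simp [Polynomial.coeff_X_pow, h]
        exact fun h' => absurd h'.symm h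
    rw [Finset.sum_congr rfl hite, Finset.sum_ite_eq' (Finset.range (n+1)) a]
    simp only [Finset.mem_range, Nat.lt_succ_iff, ha, if_true]
    rw [show (Polynomial.X^a * ((n.choose a : ℕ):P) * (2:P)^n)
        = Polynomial.C ((n.choose a:ℝ)*2^n) * Polynomial.X^a from by
        rw [map_mul, map_pow, map_natCast, map_ofNat]; ring,
      Polynomial.coeff_C_mul, Polynomial.coeff_X_pow]
    simp [mul_comm]
  rw [← hlhs, hadd, Polynomial.finset_sum_coeff,
    show ((∑ k ∈ Finset.range (n+1), (u ^ k * v ^ (n - k) * (n.choose k : PP)).coeff a)).coeff a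
      = ∑ k ∈ Finset.range (n+1), ((u ^ k * v ^ (n - k) * (n.choose k : PP)).coeff a).coeff a
      from Polynomial.finset_sum_coeff _ _ _]
  exact Finset.sum_congr rfl fun k _ => (hterm k).symm

lemma choose3_eq (n x k l : ℕ) (hx : x ≤ n) (hk : k ≤ n) (hlx : l ≤ x) (hlk : l ≤ k) :
    (n.choose x) * (x.choose l) * ((n - x).choose (k - l))
      = (n.choose k) * (k.choose l) * ((n - k).choose (x - l)) := by
  by_cases h : k + x ≤ n + l
  · have h1 : k - l ≤ n - x := by omega
    have h2 : x - l ≤ n - k := by omega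
    have := fun (a b : ℕ) (hab : b ≤ a) => Nat.cast_choose ℝ hab
    apply Nat.cast_injective (R := ℝ)
    push_cast
    rw [this n x hx, this n k hk, this x l hlx, this k l hlk, this _ _ h1, this _ _ h2]
    have e1 : n - x - (k - l) = n - k - (x - l) := by omega
    rw [e1]
    have f0 : ∀ m : ℕ, (Nat.factorial m : ℝ) ≠ 0 :=
      fun m => Nat.cast_ne_zero.2 (Nat.factorial_ne_zero m)
    field_simp
  · have h1 : n - x < k - l := by omega
    have h2 : n - k < x - l := by omega
    simp [Nat.choose_eq_zero_of_lt h1, Nat.choose_eq_zero_of_lt h2]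

lemma recip (n x k : ℕ) (hx : x ≤ n) (hk : k ≤ n) :
    (n.choose x : ℝ) * Kc x (n - x) k = (n.choose k : ℝ) * Kc k (n - k) x := by
  rw [Kc, Kc, Finset.mul_sum, Finset.mul_sum]
  have trunc : ∀ (p q : ℕ) (F : ℕ → ℝ), (∀ l, p < l → F l = 0) →
      ∑ l ∈ Finset.range (q + 1), F l = ∑ l ∈ Finset.range (min p q + 1), F l := by
    intro p q F hF
    refine (Finset.sum_subset ?_ ?_).symm
    · exact Finset.range_subset_range.2 (by omega)
    · intro l hl hnl
      simp only [Finset.mem_range] at hl hnl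
      exact hF l (by omega)
  rw [trunc x k _ (fun l hl => by simp [Nat.choose_eq_zero_of_lt hl]),
      trunc k x _ (fun l hl => by simp [Nat.choose_eq_zero_of_lt hl]), min_comm k x]
  refine Finset.sum_congr rfl fun l hl => ?_
  simp only [Finset.mem_range] at hl
  have hc : ((n.choose x) * (x.choose l) * ((n - x).choose (k - l)) : ℝ)
      = ((n.choose k) * (k.choose l) * ((n - k).choose (x - l)) : ℝ) := by
    exact_mod_cast congrArg (Nat.cast (R := ℝ))
      (choose3_eq n x k l hx hk (by omega) (by omega))
  linear_combination ((-1:ℝ)^l) * hc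

lemma neg_one_pow_sub' (s l : ℕ) (h : l ≤ s) (he : Even s) : (-1:ℝ)^(s - l) = (-1)^l := by
  have h2 : ∀ a : ℕ, (-1:ℝ)^a * (-1)^a = 1 := by
    intro a; rw [← pow_add, show a + a = 2*a by ring, pow_mul]; norm_num
  have h1 : (-1:ℝ)^(s-l) * (-1)^l = 1 := by
    rw [← pow_add, show s - l + l = s by omega]
    obtain ⟨c, hc⟩ := he
    rw [hc, show c + c = 2*c by ring, pow_mul]; norm_num
  calc (-1:ℝ)^(s-l) = (-1)^(s-l) * ((-1)^l * (-1)^l) := by rw [h2, mul_one]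
    _ = ((-1)^(s-l) * (-1)^l) * (-1)^l := by ring
    _ = (-1)^l := by rw [h1, one_mul]

lemma sum_range_even (j : ℕ) (g : ℕ → ℝ) (h : ∀ c, ¬ Even c → g c = 0) :
    ∑ c ∈ Finset.range (2*j+1), g c = ∑ b ∈ Finset.range (j+1), g (2*b) := by
  induction j with
  | zero => simp
  | succ j ih =>
    rw [show 2*(j+1)+1 = (2*j+1)+1+1 by ring, Finset.sum_range_succ, Finset.sum_range_succ,
      ih, Finset.sum_range_succ, h (2*j+1) (by simp [Nat.even_add_one, parity_simps]),
      add_zero, show 2*j+1+1 = 2*(j+1) by ring,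
      Finset.sum_range_succ (fun b => g (2*b)) (j+1), Finset.sum_range_succ (fun b => g (2*b)) j]

lemma coeff_one_sub_X_sq_pow (N c : ℕ) :
    ((1 - Polynomial.X^2 : Polynomial ℝ)^N).coeff c
      = if Even c then (-1:ℝ)^(c/2) * (N.choose (c/2)) else 0 := by
  have hexp : ((1:Polynomial ℝ) - Polynomial.X^2)^N
      = ∑ b ∈ Finset.range (N+1),
          Polynomial.C ((-1:ℝ)^b * (N.choose b)) * Polynomial.X^(2*b) := by
    rw [sub_eq_add_neg, add_comm, add_pow]
    refine Finset.sum_congr rfl fun b _ => ?_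
    rw [neg_pow, one_pow, ← pow_mul]
    simp only [map_mul, map_pow, map_neg, map_one, map_natCast]
    ring
  rw [hexp, Polynomial.finset_sum_coeff]
  simp only [Polynomial.coeff_C_mul_X_pow]
  by_cases hc : Even c
  · obtain ⟨c', hc'⟩ := hc
    have hcc : c = 2 * c' := by omega
    have hd : c / 2 = c' := by omega
    simp only [hcc, hd, show ∀ b, (2*c' = 2 * b) ↔ (b = c') from fun b => by omega]
    rw [Finset.sum_ite_eq' (Finset.range (N+1)) c' (fun b => (-1:ℝ)^b * (N.choose b))]
    by_cases hN : c' ≤ N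
    · simp [Nat.lt_succ_iff, hN]
    · simp [Nat.lt_succ_iff, hN, Nat.choose_eq_zero_of_lt (by omega : N < c')]
  · have : ∀ b, ¬ (c = 2 * b) := by
      intro b hb; exact hc ⟨b, by omega⟩
    simp [this, hc]

lemma coeff_even_part (m c : ℕ) :
    (((1+Polynomial.X)^(2*m) + (1-Polynomial.X)^(2*m) : Polynomial ℝ)).coeff c
      = if Even c then (2:ℝ) * (((2*m).choose c : ℕ) : ℝ) else (0:ℝ) := by
  rw [Polynomial.coeff_add, Polynomial.coeff_one_add_X_pow, coeff_one_sub_X_pow]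
  by_cases hc : Even c
  · rw [hc.neg_one_pow]; simp [hc]; ring
  · rw [(Nat.not_even_iff_odd.1 hc).neg_one_pow]; simp [hc]

lemma kc_eq_sum (t m j : ℕ) (hm : m ≤ t) :
    Kc (t-m) (t+m) (2*j)
      = ∑ b ∈ Finset.range (j+1), (-1:ℝ)^b * ((t-m).choose b) * ((2*m).choose (2*(j-b))) := by
  have poly : ((1-Polynomial.X)^(t-m) * (1+Polynomial.X)^(t+m)
        + (1-Polynomial.X)^(t+m) * (1+Polynomial.X)^(t-m) : Polynomial ℝ)
      = (1 - Polynomial.X^2)^(t-m)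
        * ((1+Polynomial.X)^(2*m) + (1-Polynomial.X)^(2*m)) := by
    rw [show t + m = (t - m) + 2*m by omega, pow_add, pow_add,
      show ((1:Polynomial ℝ) - Polynomial.X^2) = (1-Polynomial.X)*(1+Polynomial.X) by ring,
      mul_pow]
    ring
  -- left side
  have hL1 : (((1-Polynomial.X)^(t-m) * (1+Polynomial.X)^(t+m) : Polynomial ℝ)).coeff (2*j)
      = Kc (t-m) (t+m) (2*j) := coeff_mix _ _ _
  have hL2 : (((1-Polynomial.X)^(t+m) * (1+Polynomial.X)^(t-m) : Polynomial ℝ)).coeff (2*j)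
      = Kc (t-m) (t+m) (2*j) := by
    rw [coeff_mix]
    rw [Kc, ← Finset.sum_range_reflect]
    refine Finset.sum_congr rfl fun l hl => ?_
    simp only [Finset.mem_range] at hl
    have h1 : 2*j + 1 - 1 - l = 2*j - l := by omega
    rw [h1, show 2*j - (2*j - l) = l by omega,
      neg_one_pow_sub' (2*j) l (by omega) ⟨j, by ring⟩]
    ring
  -- right side
  have hR : (((1 - Polynomial.X^2)^(t-m)
        * ((1+Polynomial.X)^(2*m) + (1-Polynomial.X)^(2*m)) : Polynomial ℝ)).coeff (2*j)
      = 2 * ∑ b ∈ Finset.range (j+1), (-1:ℝ)^b * ((t-m).choose b) * ((2*m).choose (2*(j-b))) := by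
    rw [Polynomial.coeff_mul, Finset.Nat.sum_antidiagonal_eq_sum_range_succ_mk]
    have hg : ∀ c, ¬ Even c →
        ((1 - Polynomial.X^2 : Polynomial ℝ)^(t-m)).coeff c
          * (((1+Polynomial.X)^(2*m) + (1-Polynomial.X)^(2*m) : Polynomial ℝ)).coeff (2*j - c) = 0 := by
      intro c hc
      rw [coeff_one_sub_X_sq_pow, if_neg hc, zero_mul]
    rw [sum_range_even j _ hg]
    rw [Finset.mul_sum]
    refine Finset.sum_congr rfl fun b hb => ?_
    simp only [Finset.mem_range] at hb
    have he1 : Even (2*b) := ⟨b, by ring⟩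
    have he2 : Even (2*j - 2*b) := ⟨j - b, by omega⟩
    rw [coeff_one_sub_X_sq_pow, coeff_even_part, if_pos he1, if_pos he2,
      show (2*b)/2 = b by omega, show 2*j - 2*b = 2*(j-b) by omega]
    ring
  -- combine
  have hL : ((1-Polynomial.X)^(t-m) * (1+Polynomial.X)^(t+m)
        + (1-Polynomial.X)^(t+m) * (1+Polynomial.X)^(t-m) : Polynomial ℝ).coeff (2*j)
      = 2 * ∑ b ∈ Finset.range (j+1), (-1:ℝ)^b * ((t-m).choose b) * ((2*m).choose (2*(j-b))) := by
    rw [poly, hR]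
  rw [Polynomial.coeff_add, hL1, hL2] at hL
  linarith [hL]

lemma ctmj_eq (t m j : ℕ) (hm : m ≤ t) :
    (∑ l ∈ Finset.range (j + 1),
      (-1 : ℝ) ^ (m - l) * (Nat.choose (2 * m) (2 * l) : ℝ) * (Nat.choose (t - m) (j - l) : ℝ))
    = (-1:ℝ)^(m+j) * Kc (t-m) (t+m) (2*j) := by
  rw [kc_eq_sum t m j hm, ← Finset.sum_range_reflect, Finset.mul_sum]
  refine Finset.sum_congr rfl fun l hl => ?_
  simp only [Finset.mem_range] at hl
  rw [show j + 1 - 1 - l = j - l by omega, show j - (j - l) = l by omega]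
  by_cases hlm : j - l ≤ m
  · have e2 : (-1:ℝ)^(m+j) * (-1)^l = (-1)^(m-(j-l)) := by
      rw [← pow_add, show m + j + l = (m-(j-l)) + 2*j by omega, pow_add, pow_mul]
      norm_num
    rw [← mul_assoc, ← mul_assoc, e2]
    ring
  · simp [Nat.choose_eq_zero_of_lt (show 2*m < 2*(j-l) by omega)]

lemma choose_sq_identity (a b : ℕ) :
    (2*(a+b)).choose (2*a) * ((2*a).choose a * (2*b).choose b)
      = (2*(a+b)).choose (a+b) * ((a+b).choose a)^2 := by
  apply Nat.cast_injective (R := ℝ)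
  push_cast
  rw [Nat.cast_choose ℝ (show 2*a ≤ 2*(a+b) by omega),
      Nat.cast_choose ℝ (show a ≤ 2*a by omega),
      Nat.cast_choose ℝ (show b ≤ 2*b by omega),
      Nat.cast_choose ℝ (show a+b ≤ 2*(a+b) by omega),
      Nat.cast_choose ℝ (show a ≤ a+b by omega)]
  rw [show 2*(a+b) - 2*a = 2*b by omega, show 2*a - a = a by omega,
      show 2*b - b = b by omega, show 2*(a+b) - (a+b) = a+b by omega,
      show a + b - a = b by omega]
  have f0 : ∀ k : ℕ, (Nat.factorial k : ℝ) ≠ 0 :=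
    fun k => Nat.cast_ne_zero.2 (Nat.factorial_ne_zero k)
  field_simp

lemma four_pow_le (a b : ℕ) :
    4^(a+b) ≤ (a+b+1)^2 * ((2*a).choose a * (2*b).choose b) := by
  have h1 : ∀ c : ℕ, 4^c ≤ (2*c+1) * (2*c).choose c := by
    intro c
    rcases Nat.eq_zero_or_pos c with hc | hc
    · subst hc; norm_num
    · calc 4^c ≤ 2*c * Nat.centralBinom c :=
          Nat.four_pow_le_two_mul_self_mul_centralBinom c hc
        _ ≤ (2*c+1) * Nat.centralBinom c := by
          exact Nat.mul_le_mul_right _ (by omega)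
        _ = (2*c+1) * (2*c).choose c := by rw [Nat.centralBinom]
  calc 4^(a+b) = 4^a * 4^b := by rw [pow_add]
    _ ≤ ((2*a+1) * (2*a).choose a) * ((2*b+1) * (2*b).choose b) :=
        Nat.mul_le_mul (h1 a) (h1 b)
    _ = ((2*a+1)*(2*b+1)) * ((2*a).choose a * (2*b).choose b) := by ring
    _ ≤ (a+b+1)^2 * ((2*a).choose a * (2*b).choose b) := by
        have : (2*a+1)*(2*b+1) ≤ (a+b+1)^2 := by nlinarith [sq_nonneg (a - b), sq_nonneg ((a:ℤ) - b)]
        exact Nat.mul_le_mul_right _ this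

lemma exp_taylor4 (x : ℝ) (hx : 0 ≤ x) : 1 + x + x^2/2 + x^3/6 ≤ Real.exp x := by
  have h := Real.sum_le_exp_of_nonneg hx 4
  simp [Finset.sum_range_succ, Nat.factorial] at h
  convert h using 1

lemma exp_taylor5 (x : ℝ) (hx : 0 ≤ x) : 1 + x + x^2/2 + x^3/6 + x^4/24 ≤ Real.exp x := by
  have h := Real.sum_le_exp_of_nonneg hx 5
  simp [Finset.sum_range_succ, Nat.factorial] at h
  convert h using 1

lemma key_u (u : ℝ) (hu0 : 0 ≤ u) (hu : u ≤ 6/7) : 1 + u ≤ Real.exp (4*u) * (1 - u) := by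
  have ht : 1 + 4*u + (4*u)^2/2 + (4*u)^3/6 ≤ Real.exp (4*u) :=
    exp_taylor4 (4*u) (by linarith)
  have hpoly : 1 + u ≤ (1 + 4*u + (4*u)^2/2 + (4*u)^3/6) * (1 - u) := by
    nlinarith [mul_nonneg hu0 hu0, mul_nonneg (mul_nonneg hu0 hu0) hu0,
      mul_nonneg (mul_nonneg (mul_nonneg hu0 hu0) hu0) hu0]
  calc 1 + u ≤ (1 + 4*u + (4*u)^2/2 + (4*u)^3/6) * (1 - u) := hpoly
    _ ≤ Real.exp (4*u) * (1 - u) := by nlinarith [ht]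

lemma ratio_le_exp (t i : ℕ) (hi : 1 ≤ i) (hit : i ≤ t) (h7 : 7*i ≤ 6*t + 6) :
    ((t:ℝ) + i) ≤ Real.exp ((4*i - 2)/t) * ((t:ℝ) + 1 - i) := by
  have ht1 : 1 ≤ t := le_trans hi hit
  have htpos : (0:ℝ) < t := by exact_mod_cast ht1
  set u : ℝ := (2*i - 1)/(2*t + 1) with hu
  have hden : (0:ℝ) < 2*t + 1 := by positivity
  have hi' : (1:ℝ) ≤ i := by exact_mod_cast hi
  have hit' : (i:ℝ) ≤ t := by exact_mod_cast hit
  have hu0 : 0 ≤ u := by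
    apply div_nonneg _ (le_of_lt hden)
    linarith
  have hu67 : u ≤ 6/7 := by
    rw [hu, div_le_div_iff₀ hden (by norm_num)]
    have h7' : (7:ℝ)*i ≤ 6*t + 6 := by exact_mod_cast h7
    linarith
  have hkey := key_u u hu0 hu67
  have e1 : (1 + u) * ((2*t+1)/2) = (t:ℝ) + i := by
    rw [hu]; field_simp; ring
  have e2 : (1 - u) * ((2*t+1)/2) = (t:ℝ) + 1 - i := by
    rw [hu]; field_simp; ring
  have hexp : Real.exp (4*u) ≤ Real.exp ((4*i - 2)/t) := by
    apply Real.exp_le_exp.2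
    rw [hu, ← mul_div_assoc]
    rw [div_le_div_iff₀ hden htpos]
    nlinarith
  calc (t:ℝ) + i = (1 + u) * ((2*t+1)/2) := e1.symm
    _ ≤ (Real.exp (4*u) * (1 - u)) * ((2*t+1)/2) := by
        apply mul_le_mul_of_nonneg_right hkey (by positivity)
    _ = Real.exp (4*u) * ((1 - u) * ((2*t+1)/2)) := by ring
    _ = Real.exp (4*u) * ((t:ℝ) + 1 - i) := by rw [e2]
    _ ≤ Real.exp ((4*i - 2)/t) * ((t:ℝ) + 1 - i) := by
        apply mul_le_mul_of_nonneg_right hexp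
        linarith

lemma fact_bound (t m : ℕ) (hm7 : 7*m ≤ 6*t) (hmt : m ≤ t) :
    ((t+m).factorial : ℝ) * (t-m).factorial
      ≤ Real.exp (2*m^2/t) * ((t.factorial : ℝ))^2 := by
  induction m with
  | zero => simp [sq]
  | succ m ih =>
    have hm7' : 7*m ≤ 6*t := by omega
    have hmt' : m ≤ t := by omega
    have hm1t : m + 1 ≤ t := by omega
    have ih' := ih hm7' hmt'
    have hstep := ratio_le_exp t (m+1) (by omega) hm1t (by omega)
    push_cast at hstep
    rw [show (t:ℝ)+1-((m:ℝ)+1) = (t:ℝ) - m by ring] at hstep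
    have hfact1 : ((t+(m+1)).factorial : ℝ) = ((t:ℝ) + ((m:ℝ)+1)) * (t+m).factorial := by
    
      rw [show t+(m+1) = (t+m)+1 by ring, Nat.factorial_succ]
      push_cast
      ring
    have hfact2 : ((t-m).factorial : ℝ) = ((t:ℝ) - m) * (t-(m+1)).factorial := by
      rw [show t - m = (t-(m+1))+1 by omega, Nat.factorial_succ]
      push_cast [Nat.cast_sub hm1t]
      ring
    have hpos : (0:ℝ) < (t:ℝ) - m := by
      have : ((m:ℝ)) < t := by exact_mod_cast (by omega : m < t)
      linarith
    have hApos : (0:ℝ) ≤ ((t+m).factorial : ℝ) := by positivity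
    have hBpos : (0:ℝ) ≤ ((t-(m+1)).factorial : ℝ) := by positivity
    have hexp2 : Real.exp ((4*((m:ℝ)+1) - 2)/t) * Real.exp (2*(m:ℝ)^2/t)
        = Real.exp (2*((m:ℝ)+1)^2/t) := by
      rw [← Real.exp_add]
      congr 1
      have : (t:ℝ) ≠ 0 := Nat.cast_ne_zero.2 (by omega)
      field_simp
      ring
    have goalcast : (((m+1:ℕ)):ℝ) = (m:ℝ)+1 := by push_cast; ring
    calc ((t+(m+1)).factorial : ℝ) * ((t-(m+1)).factorial : ℝ)
        = ((t:ℝ) + ((m:ℝ)+1)) * (((t+m).factorial : ℝ) * (t-(m+1)).factorial) := by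
          rw [hfact1]; ring
      _ ≤ (Real.exp ((4*((m:ℝ)+1) - 2)/t) * ((t:ℝ) - m)) * (((t+m).factorial : ℝ) * (t-(m+1)).factorial) := by
          apply mul_le_mul_of_nonneg_right _ (mul_nonneg hApos hBpos)
          exact hstep
      _ = Real.exp ((4*((m:ℝ)+1) - 2)/t) * (((t+m).factorial : ℝ) * (((t:ℝ) - m) * (t-(m+1)).factorial)) := by
          ring
      _ = Real.exp ((4*((m:ℝ)+1) - 2)/t) * (((t+m).factorial : ℝ) * ((t-m).factorial : ℝ)) := by
          rw [← hfact2]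
      _ ≤ Real.exp ((4*((m:ℝ)+1) - 2)/t) * (Real.exp (2*(m:ℝ)^2/t) * ((t.factorial : ℝ))^2) := by
          apply mul_le_mul_of_nonneg_left ih' (le_of_lt (Real.exp_pos _))
      _ = Real.exp (2*((m+1:ℕ):ℝ)^2/t) * ((t.factorial : ℝ))^2 := by
          rw [goalcast, ← hexp2]; ring

lemma central_ratio_bound (t m : ℕ) (hmt : m ≤ t) :
    ((2*t).choose t : ℝ) ≤ Real.exp (2*m^2/t) * ((2*t).choose (t-m)) := by
  have f0 : ∀ k : ℕ, (0:ℝ) < (Nat.factorial k : ℝ) :=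
    fun k => by exact_mod_cast Nat.factorial_pos k
  by_cases h7 : 7*m ≤ 6*t
  · have h1 : ((2*t).choose t : ℝ) = ((2*t).factorial : ℝ) / ((t.factorial : ℝ) * (t.factorial : ℝ)) := by
      rw [Nat.cast_choose ℝ (show t ≤ 2*t by omega), show 2*t - t = t by omega]
    have h2 : ((2*t).choose (t-m) : ℝ)
        = ((2*t).factorial : ℝ) / (((t-m).factorial : ℝ) * ((t+m).factorial : ℝ)) := by
      rw [Nat.cast_choose ℝ (show t-m ≤ 2*t by omega), show 2*t - (t-m) = t+m by omega]
    rw [h1, h2, mul_div_assoc']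
    rw [div_le_div_iff₀ (by positivity) (by positivity)]
    have hfb := fact_bound t m h7 hmt
    have h2tf : (0:ℝ) ≤ ((2*t).factorial : ℝ) := le_of_lt (f0 _)
    have := mul_le_mul_of_nonneg_left hfb h2tf
    nlinarith [this]
  · have ht1 : 1 ≤ t := by omega
    have hc1 : ((2*t).choose t : ℝ) ≤ 4^t := by
      have : (2*t).choose t ≤ 4^t := by
        calc (2*t).choose t ≤ ∑ k ∈ Finset.range (2*t+1), (2*t).choose k :=
            Finset.single_le_sum (fun k _ => Nat.zero_le _) (by simp; omega)
          _ = 2^(2*t) := Nat.sum_range_choose (2*t)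
          _ = 4^t := by rw [pow_mul]; norm_num
      exact_mod_cast this
    have hc2 : (1:ℝ) ≤ ((2*t).choose (t-m) : ℝ) := by
      exact_mod_cast Nat.succ_le_of_lt (Nat.choose_pos (show t-m ≤ 2*t by omega))
    have h4 : (4:ℝ)^t ≤ Real.exp (2*m^2/t) := by
      have hepos : (4:ℝ) ≤ Real.exp (72/49) := by
        have := exp_taylor5 (72/49) (by norm_num)
        nlinarith [this]
      calc (4:ℝ)^t ≤ (Real.exp (72/49))^t := pow_le_pow_left₀ (by norm_num) hepos t
        _ = Real.exp ((72/49)*t) := by rw [← Real.exp_nat_mul]; ring_nf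
        _ ≤ Real.exp (2*m^2/t) := by
          apply Real.exp_le_exp.2
          have htpos : (0:ℝ) < t := by exact_mod_cast ht1
          rw [show (72:ℝ)/49*t = (72*t)/49 by ring, div_le_div_iff₀ (by norm_num) htpos]
          have h67 : 6*t + 1 ≤ 7*m := by omega
          have h67' : (6*(t:ℝ) + 1) ≤ 7*m := by exact_mod_cast h67
          have htm : (0:ℝ) ≤ t := le_of_lt htpos
          nlinarith [h67', htm]
    calc ((2*t).choose t : ℝ) ≤ 4^t := hc1
      _ ≤ Real.exp (2*m^2/t) := h4
      _ ≤ Real.exp (2*m^2/t) * ((2*t).choose (t-m)) := by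
          nlinarith [Real.exp_pos (2*(m:ℝ)^2/t), hc2]


theorem stmt16 (t m : ℕ) (hmt : m ≤ t) :
    Real.sqrt (∑ j ∈ Finset.range (t + 1), (Ctmj t m j) ^ 2) ≤
      ((t : ℝ) + 1) * Real.exp ((m : ℝ) ^ 2 / t) ∧
    ∀ j : ℕ, j ≤ t → |Ctmj t m j| ≤ ((t : ℝ) + 1) * Real.exp ((m : ℝ) ^ 2 / t) := by
  have hEpos : (0:ℝ) < ((t : ℝ) + 1) * Real.exp ((m : ℝ) ^ 2 / t) := by positivity
  set E : ℝ := ((t : ℝ) + 1) * Real.exp ((m : ℝ) ^ 2 / t) with hE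
  have hE2 : E^2 = ((t:ℝ)+1)^2 * Real.exp (2*(m:ℝ)^2/t) := by
    have hee : Real.exp ((m:ℝ)^2/t) ^ 2 = Real.exp (2*(m:ℝ)^2/t) := by
      rw [pow_two, ← Real.exp_add]; congr 1; ring
    rw [hE, mul_pow, hee]
  set D : ℝ := (((2*t).choose (t-m) : ℕ) : ℝ) with hD
  set G : ℝ := (((2*t).choose t : ℕ) : ℝ) with hG
  have hDpos : (0:ℝ) < D := by
    rw [hD]; exact_mod_cast Nat.choose_pos (show t-m ≤ 2*t by omega)
  have hGD : G ≤ Real.exp (2*(m:ℝ)^2/t) * D := central_ratio_bound t m hmt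
  -- pointwise squared bound
  have hterm : ∀ j, j ≤ t → (Ctmj t m j)^2 * (D^2 * 4^t)
      ≤ (((t:ℝ)+1)^2 * G) * ((((2*t).choose (2*j) : ℕ) : ℝ)
          * (Kc (2*j) (2*(t-j)) (t-m))^2) := by
    intro j hj
    have hCtj : (0:ℝ) < ((t.choose j : ℕ) : ℝ) := by exact_mod_cast Nat.choose_pos hj
    have hc : Ctmj t m j * ((t.choose j : ℕ) : ℝ)
        = (-1:ℝ)^(m+j) * Kc (t-m) (t+m) (2*j) := by
      rw [Ctmj, ← Finset.sum_div, div_mul_cancel₀ _ (ne_of_gt hCtj)]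
      exact ctmj_eq t m j hmt
    have hrec : D * Kc (t-m) (t+m) (2*j)
        = (((2*t).choose (2*j) : ℕ) : ℝ) * Kc (2*j) (2*(t-j)) (t-m) := by
      have h := recip (2*t) (t-m) (2*j) (by omega) (by omega)
      rw [show 2*t - (t-m) = t+m by omega, show 2*t - 2*j = 2*(t-j) by omega] at h
      exact h
    -- squared identity
    have hsq : (Ctmj t m j)^2 * (((t.choose j : ℕ) : ℝ))^2 * D^2
        = ((((2*t).choose (2*j) : ℕ) : ℝ))^2 * (Kc (2*j) (2*(t-j)) (t-m))^2 := by
      have h1 : (Ctmj t m j * ((t.choose j : ℕ) : ℝ)) * (D * Kc (t-m) (t+m) (2*j))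
          = ((-1:ℝ)^(m+j) * Kc (t-m) (t+m) (2*j)) * (D * Kc (t-m) (t+m) (2*j)) := by
        rw [hc]
      have h2 := congrArg (fun z => z^2) hc
      have hneg : ((-1:ℝ)^(m+j))^2 = 1 := by
        rw [← pow_mul, mul_comm (m+j) 2, pow_mul]; norm_num
      calc (Ctmj t m j)^2 * (((t.choose j : ℕ) : ℝ))^2 * D^2
          = (Ctmj t m j * ((t.choose j : ℕ) : ℝ))^2 * D^2 := by ring
        _ = ((-1:ℝ)^(m+j) * Kc (t-m) (t+m) (2*j))^2 * D^2 := by rw [h2]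
        _ = ((-1:ℝ)^(m+j))^2 * (D * Kc (t-m) (t+m) (2*j))^2 := by ring
        _ = (D * Kc (t-m) (t+m) (2*j))^2 := by rw [hneg, one_mul]
        _ = ((((2*t).choose (2*j) : ℕ) : ℝ))^2 * (Kc (2*j) (2*(t-j)) (t-m))^2 := by
            rw [hrec]; ring
    -- the 4^t bound, in ℕ then ℝ
    have hAB : (4:ℝ)^t * (((2*t).choose (2*j) : ℕ) : ℝ)
        ≤ ((t:ℝ)+1)^2 * G * (((t.choose j : ℕ) : ℝ))^2 := by
      have hN : 4^t * ((2*t).choose (2*j)) ≤ (t+1)^2 * ((2*t).choose t) * (t.choose j)^2 := by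
        have hid := choose_sq_identity j (t-j)
        rw [show j + (t-j) = t by omega] at hid
        have hfp := four_pow_le j (t-j)
        rw [show j + (t-j) = t by omega] at hfp
        calc 4^t * ((2*t).choose (2*j))
            ≤ ((t+1)^2 * ((2*j).choose j * (2*(t-j)).choose (t-j))) * ((2*t).choose (2*j)) :=
              Nat.mul_le_mul_right _ hfp
          _ = (t+1)^2 * ((2*t).choose (2*j) * ((2*j).choose j * (2*(t-j)).choose (t-j))) := by ring
          _ = (t+1)^2 * ((2*t).choose t * (t.choose j)^2) := by rw [hid]
          _ = (t+1)^2 * ((2*t).choose t) * (t.choose j)^2 := by ring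
      rw [hG]
      exact_mod_cast hN
    -- combine: cancel (choose t j)^2
    have hKnn : (0:ℝ) ≤ (((2*t).choose (2*j) : ℕ) : ℝ) * (Kc (2*j) (2*(t-j)) (t-m))^2 := by
      positivity
    have hmain : ((Ctmj t m j)^2 * (D^2 * 4^t)) * (((t.choose j : ℕ) : ℝ))^2
        ≤ ((((t:ℝ)+1)^2 * G) * ((((2*t).choose (2*j) : ℕ) : ℝ)
            * (Kc (2*j) (2*(t-j)) (t-m))^2)) * (((t.choose j : ℕ) : ℝ))^2 := by
      have e1 : ((Ctmj t m j)^2 * (D^2 * 4^t)) * (((t.choose j : ℕ) : ℝ))^2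
          = ((4:ℝ)^t * (((2*t).choose (2*j) : ℕ) : ℝ))
            * ((((2*t).choose (2*j) : ℕ) : ℝ) * (Kc (2*j) (2*(t-j)) (t-m))^2) := by
        calc ((Ctmj t m j)^2 * (D^2 * 4^t)) * (((t.choose j : ℕ) : ℝ))^2
            = ((Ctmj t m j)^2 * (((t.choose j : ℕ) : ℝ))^2 * D^2) * 4^t := by ring
          _ = (((((2*t).choose (2*j) : ℕ) : ℝ))^2 * (Kc (2*j) (2*(t-j)) (t-m))^2) * 4^t := by
              rw [hsq]
          _ = _ := by ring
      rw [e1]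
      calc ((4:ℝ)^t * (((2*t).choose (2*j) : ℕ) : ℝ))
            * ((((2*t).choose (2*j) : ℕ) : ℝ) * (Kc (2*j) (2*(t-j)) (t-m))^2)
          ≤ (((t:ℝ)+1)^2 * G * (((t.choose j : ℕ) : ℝ))^2)
            * ((((2*t).choose (2*j) : ℕ) : ℝ) * (Kc (2*j) (2*(t-j)) (t-m))^2) :=
            mul_le_mul_of_nonneg_right hAB hKnn
        _ = _ := by ring
    exact le_of_mul_le_mul_right hmain (by positivity)
  -- sum bound
  have hsum : (∑ j ∈ Finset.range (t + 1), (Ctmj t m j) ^ 2) * (D^2 * 4^t)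
      ≤ (((t:ℝ)+1)^2 * G) * (4^t * D) := by
    rw [Finset.sum_mul]
    calc ∑ j ∈ Finset.range (t + 1), (Ctmj t m j) ^ 2 * (D^2 * 4^t)
        ≤ ∑ j ∈ Finset.range (t + 1), (((t:ℝ)+1)^2 * G)
            * ((((2*t).choose (2*j) : ℕ) : ℝ) * (Kc (2*j) (2*(t-j)) (t-m))^2) := by
          apply Finset.sum_le_sum
          intro j hj
          exact hterm j (by simp at hj; omega)
      _ = (((t:ℝ)+1)^2 * G) * ∑ j ∈ Finset.range (t + 1),
            ((((2*t).choose (2*j) : ℕ) : ℝ) * (Kc (2*j) (2*(t-j)) (t-m))^2) := by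
          rw [Finset.mul_sum]
      _ ≤ (((t:ℝ)+1)^2 * G) * (4^t * D) := by
          apply mul_le_mul_of_nonneg_left _ (by positivity)
          -- embed even indices into full orthogonality sum
          have horth := orth (2*t) (t-m) (by omega)
          set F : ℕ → ℝ := fun k => (((2*t).choose k : ℕ) : ℝ) * (Kc k (2*t-k) (t-m))^2 with hF
          have hembed : ∑ j ∈ Finset.range (t + 1),
              ((((2*t).choose (2*j) : ℕ) : ℝ) * (Kc (2*j) (2*(t-j)) (t-m))^2)
              ≤ ∑ k ∈ Finset.range (2*t + 1), F k := by
            have hre : ∀ j ∈ Finset.range (t+1),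
                ((((2*t).choose (2*j) : ℕ) : ℝ) * (Kc (2*j) (2*(t-j)) (t-m))^2)
                = F (2*j) := by
              intro j hj
              simp only [Finset.mem_range] at hj
              rw [hF]
              simp only
              rw [show 2*(t-j) = 2*t - 2*j by omega]
            rw [Finset.sum_congr rfl hre]
            have hinj : ∀ i ∈ Finset.range (t+1), ∀ k ∈ Finset.range (t+1),
                2*i = 2*k → i = k := by omega
            have him : ∑ j ∈ Finset.range (t+1), F (2*j)
                = ∑ k ∈ (Finset.range (t+1)).image (fun j => 2*j), F k :=
              (Finset.sum_image hinj).symm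
            rw [him]
            apply Finset.sum_le_sum_of_subset_of_nonneg
            · intro k hk
              simp only [Finset.mem_image, Finset.mem_range] at hk ⊢
              obtain ⟨i, hi, rfl⟩ := hk
              omega
            · intro k _ _
              rw [hF]
              positivity
          calc _ ≤ ∑ k ∈ Finset.range (2*t + 1), F k := hembed
            _ = 2^(2*t) * ((2*t).choose (t-m)) := horth
            _ = 4^t * D := by rw [hD, pow_mul]; norm_num
  have hS : (∑ j ∈ Finset.range (t + 1), (Ctmj t m j) ^ 2) ≤ E^2 := by
    have hrhs : (((t:ℝ)+1)^2 * G) * (4^t * D) ≤ E^2 * (D^2 * 4^t) := by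
      rw [hE2]
      calc (((t:ℝ)+1)^2 * G) * (4^t * D)
          ≤ (((t:ℝ)+1)^2 * (Real.exp (2*(m:ℝ)^2/t) * D)) * (4^t * D) := by
            apply mul_le_mul_of_nonneg_right _ (by positivity)
            exact mul_le_mul_of_nonneg_left hGD (by positivity)
        _ = ((t:ℝ)+1)^2 * Real.exp (2*(m:ℝ)^2/t) * (D^2 * 4^t) := by ring
    have h1 := le_trans hsum hrhs
    exact le_of_mul_le_mul_right h1 (by positivity)
  have hsqnn : (0:ℝ) ≤ ∑ j ∈ Finset.range (t + 1), (Ctmj t m j) ^ 2 :=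
    Finset.sum_nonneg fun j _ => sq_nonneg _
  constructor
  · calc Real.sqrt (∑ j ∈ Finset.range (t + 1), (Ctmj t m j) ^ 2)
        ≤ Real.sqrt (E^2) := Real.sqrt_le_sqrt hS
      _ = E := Real.sqrt_sq hEpos.le
  · intro j hj
    have h1 : (Ctmj t m j)^2 ≤ ∑ j ∈ Finset.range (t + 1), (Ctmj t m j) ^ 2 := by
      apply Finset.single_le_sum (f := fun j => (Ctmj t m j)^2)
        (fun i _ => sq_nonneg _)
      simp; omega
    have h2 : (Ctmj t m j)^2 ≤ E^2 := le_trans h1 hS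
    calc |Ctmj t m j| = Real.sqrt ((Ctmj t m j)^2) := (Real.sqrt_sq_eq_abs _).symm
      _ ≤ Real.sqrt (E^2) := Real.sqrt_le_sqrt h2
      _ = E := Real.sqrt_sq hEpos.le
end

section
/- For integers 0 ≤ m ≤ t, the shifted Chebyshev polynomial satisfies the identity T_m(2x − 1) = Σ_{j=0}^{t} C(t,m,j) · B_j^t(x) for all real x, where C(t,m,j) = Σ_{l=0}^{j} (−1)^(m−l) · C(2m,2l) · C(t−m, j−l) / C(t,j) (with the convention C(a,b) = 0 when b > a ≥ 0) and B_j^t(x) = C(t,j) · x^j · (1−x)^{t−j}. -/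
open Finset

/-- The `j`-th Bernstein basis polynomial of degree `t`: `C(t,j) x^j (1-x)^{t-j}`. -/
noncomputable def bern (t j : ℕ) (x : ℝ) : ℝ :=
  (t.choose j : ℝ) * x ^ j * (1 - x) ^ (t - j)

lemma sum_range_even_odd {M : Type*} [AddCommMonoid M] (g : ℕ → M) (n : ℕ) :
    ∑ k ∈ range (2 * n), g k = ∑ l ∈ range n, (g (2 * l) + g (2 * l + 1)) := by
  induction n with
  | zero => simp
  | succ n ih =>
      rw [Nat.mul_succ, show 2*n+2 = (2*n+1)+1 from rfl, sum_range_succ, sum_range_succ,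
        sum_range_succ, ← ih, add_assoc]

lemma cheb_zpow (n : ℤ) (z : ℂ) (hz : z ≠ 0) :
    (Polynomial.Chebyshev.T ℂ n).eval ((z + z⁻¹) / 2) = (z ^ n + z ^ (-n)) / 2 := by
  induction n using Polynomial.Chebyshev.induct with
  | zero => simp
  | one => simp [zpow_neg]
  | add_two n ih1 ih2 =>
      rw [Polynomial.Chebyshev.T_add_two]
      simp only [Polynomial.eval_sub, Polynomial.eval_mul, Polynomial.eval_X,
        Polynomial.eval_ofNat, ih1, ih2]
      set w := z ^ (n : ℤ) with hw
      have hwne : w ≠ 0 := zpow_ne_zero _ hz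
      have e1 : z ^ ((n : ℤ) + 1) = w * z := zpow_add_one₀ hz _
      have e2 : z ^ ((n : ℤ) + 2) = w * z * z := by
        rw [show ((n : ℤ) + 2) = (n : ℤ) + 1 + 1 by ring, zpow_add_one₀ hz, e1]
      have e3 : z ^ (-((n : ℤ) + 1)) = w⁻¹ * z⁻¹ := by
        rw [show (-((n : ℤ) + 1)) = -(n : ℤ) + -1 by ring, zpow_add₀ hz, zpow_neg_one,
          zpow_neg, hw]
      have e4 : z ^ (-((n : ℤ) + 2)) = w⁻¹ * z⁻¹ * z⁻¹ := by
        rw [show (-((n : ℤ) + 2)) = -((n : ℤ) + 1) + -1 by ring, zpow_add₀ hz, zpow_neg_one, e3]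
      have e5 : z ^ (-(n : ℤ)) = w⁻¹ := by rw [zpow_neg, hw]
      rw [e1, e2, e3, e4, e5]
      linear_combination ((w⁻¹ + w) / 2) * mul_inv_cancel₀ hz
  | neg_add_one n ih1 ih2 =>
      rw [Polynomial.Chebyshev.T_sub_one]
      simp only [Polynomial.eval_sub, Polynomial.eval_mul, Polynomial.eval_X,
        Polynomial.eval_ofNat, ih1, ih2]
      set w := z ^ (n : ℤ) with hw
      have hwne : w ≠ 0 := zpow_ne_zero _ hz
      have f1 : z ^ (-(n : ℤ)) = w⁻¹ := by rw [zpow_neg, hw]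
      have f2 : z ^ (-(-(n : ℤ))) = w := by rw [neg_neg, hw]
      have f3 : z ^ (-(n : ℤ) + 1) = w⁻¹ * z := by rw [zpow_add_one₀ hz, f1]
      have f4 : z ^ (-(-(n : ℤ) + 1)) = w * z⁻¹ := by
        rw [show (-(-(n : ℤ) + 1)) = (n : ℤ) + -1 by ring, zpow_add₀ hz, zpow_neg_one, hw]
      have f5 : z ^ (-(n : ℤ) - 1) = w⁻¹ * z⁻¹ := by
        rw [show (-(n : ℤ) - 1) = -(n : ℤ) + -1 by ring, zpow_add₀ hz, zpow_neg_one, f1]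
      have f6 : z ^ (-(-(n : ℤ) - 1)) = w * z := by
        rw [show (-(-(n : ℤ) - 1)) = (n : ℤ) + 1 by ring, zpow_add_one₀ hz, hw]
      rw [f1, f2, f3, f4, f5, f6]
      ring

lemma key (m : ℕ) (x : ℝ) :
    (Polynomial.Chebyshev.T ℝ (m : ℤ)).eval (2 * x - 1) =
      ∑ l ∈ range (m + 1), (Nat.choose (2 * m) (2 * l) : ℝ) * x ^ l * (x - 1) ^ (m - l) := by
  apply Complex.ofReal_injective
  rw [Polynomial.Chebyshev.complex_ofReal_eval_T]
  push_cast
  obtain ⟨c, hc⟩ : ∃ c : ℂ, c ^ 2 = (x : ℂ) := IsAlgClosed.exists_pow_nat_eq _ two_pos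
  obtain ⟨s, hs⟩ : ∃ s : ℂ, s ^ 2 = (x : ℂ) - 1 := IsAlgClosed.exists_pow_nat_eq _ two_pos
  have h1 : (c + s) * (c - s) = 1 := by
    have : (c + s) * (c - s) = c ^ 2 - s ^ 2 := by ring
    rw [this, hc, hs]; ring
  have hu : c + s ≠ 0 := left_ne_zero_of_mul_eq_one h1
  set z : ℂ := (c + s) ^ 2 with hzdef
  have hz : z ≠ 0 := pow_ne_zero _ hu
  have hzinv : z⁻¹ = (c - s) ^ 2 := by
    apply inv_eq_of_mul_eq_one_right
    rw [hzdef, ← mul_pow, h1, one_pow]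
  have hmid : (2 * (x : ℂ) - 1) = (z + z⁻¹) / 2 := by
    rw [hzinv, hzdef]
    have e : (c + s) ^ 2 + (c - s) ^ 2 = 2 * c ^ 2 + 2 * s ^ 2 := by ring
    rw [e, hc, hs]; ring
  rw [hmid, cheb_zpow _ z hz, zpow_natCast, zpow_neg, zpow_natCast, ← inv_pow, hzinv, hzdef,
    ← pow_mul, ← pow_mul]
  have expand : (c + s) ^ (2 * m) + (c - s) ^ (2 * m) =
      ∑ l ∈ range (m + 1),
        2 * ((Nat.choose (2 * m) (2 * l) : ℂ) * (x : ℂ) ^ l * ((x : ℂ) - 1) ^ (m - l)) := by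
    rw [show c - s = c + (-s) by ring, add_pow, add_pow, ← sum_add_distrib]
    have hext : ∑ k ∈ range (2 * m + 1),
          (c ^ k * s ^ (2 * m - k) * ((2 * m).choose k : ℂ) +
            c ^ k * (-s) ^ (2 * m - k) * ((2 * m).choose k : ℂ)) =
        ∑ k ∈ range (2 * (m + 1)),
          (c ^ k * s ^ (2 * m - k) * ((2 * m).choose k : ℂ) +
            c ^ k * (-s) ^ (2 * m - k) * ((2 * m).choose k : ℂ)) := by
      conv_rhs => rw [show 2 * (m + 1) = (2 * m + 1) + 1 by ring, sum_range_succ]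
      rw [Nat.choose_eq_zero_of_lt (Nat.lt_succ_self _)]
      simp
    rw [hext, sum_range_even_odd]
    refine sum_congr rfl fun l hl => ?_
    have hlm : l ≤ m := by simpa [Nat.lt_succ_iff] using hl
    have hodd : c ^ (2 * l + 1) * s ^ (2 * m - (2 * l + 1)) * ((2 * m).choose (2 * l + 1) : ℂ) +
        c ^ (2 * l + 1) * (-s) ^ (2 * m - (2 * l + 1)) * ((2 * m).choose (2 * l + 1) : ℂ) = 0 := by
      rcases lt_or_ge l m with h | h
      · rw [Odd.neg_pow ⟨m - l - 1, by omega⟩]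
        ring
      · have : m = l := le_antisymm (by omega) hlm
        rw [Nat.choose_eq_zero_of_lt (by omega)]
        simp
    rw [hodd, add_zero, Even.neg_pow (⟨m - l, by omega⟩ : Even (2 * m - 2 * l)), show 2 * m - 2 * l = 2 * (m - l) by omega,
      pow_mul, pow_mul, hc, hs]
    ring
  rw [expand, Finset.sum_div]
  refine sum_congr rfl fun l _ => ?_
  ring

theorem stmt17 (t m : ℕ) (hmt : m ≤ t) (x : ℝ) :
    (Polynomial.Chebyshev.T ℝ (m : ℤ)).eval (2 * x - 1) =
      ∑ j ∈ Finset.range (t + 1), Ctmj t m j * bern t j x := by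
  have hterm : ∀ j ∈ range (t + 1), Ctmj t m j * bern t j x =
      ∑ l ∈ range (j + 1), ((-1 : ℝ) ^ (m - l) * (Nat.choose (2 * m) (2 * l) : ℝ)) *
        ((Nat.choose (t - m) (j - l) : ℝ) * (x ^ j * (1 - x) ^ (t - j))) := by
    intro j hj
    have hjt : j ≤ t := by simpa [Nat.lt_succ_iff] using hj
    have hD : (Nat.choose t j : ℝ) ≠ 0 := Nat.cast_ne_zero.2 (Nat.choose_pos hjt).ne'
    unfold Ctmj bern
    rw [Finset.sum_mul]
    refine sum_congr rfl fun l _ => ?_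
    field_simp
  rw [sum_congr rfl hterm]
  have hswap := Finset.sum_Ico_Ico_comm 0 (t + 1)
    (fun l j => ((-1 : ℝ) ^ (m - l) * (Nat.choose (2 * m) (2 * l) : ℝ)) *
      ((Nat.choose (t - m) (j - l) : ℝ) * (x ^ j * (1 - x) ^ (t - j))))
  simp only [Nat.Ico_zero_eq_range] at hswap
  rw [← hswap]
  have hsub : range (m + 1) ⊆ range (t + 1) := by
    intro a ha; simp only [mem_range] at *; omega
  rw [← sum_subset hsub (by
    intro l _ hl
    simp only [mem_range, not_lt] at hl
    rw [Nat.choose_eq_zero_of_lt (by omega)]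
    simp)]
  have hinner : ∀ l ∈ range (m + 1),
      ∑ j ∈ Ico l (t + 1), ((Nat.choose (t - m) (j - l) : ℝ) * (x ^ j * (1 - x) ^ (t - j)))
        = x ^ l * (1 - x) ^ (m - l) := by
    intro l hl
    have hlm : l ≤ m := by simpa [Nat.lt_succ_iff] using hl
    rw [sum_Ico_eq_sum_range]
    have hsub2 : range (t - m + 1) ⊆ range (t + 1 - l) := by
      intro a ha; simp only [mem_range] at *; omega
    rw [← sum_subset hsub2 (by
      intro k _ hk
      simp only [mem_range, not_lt] at hk
      rw [show l + k - l = k by omega, Nat.choose_eq_zero_of_lt (by omega)]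
      simp)]
    have step : ∀ k ∈ range (t - m + 1),
        ((Nat.choose (t - m) (l + k - l) : ℝ) * (x ^ (l + k) * (1 - x) ^ (t - (l + k)))) =
          (x ^ l * (1 - x) ^ (m - l)) *
            (x ^ k * (1 - x) ^ (t - m - k) * (Nat.choose (t - m) k : ℝ)) := by
      intro k hk
      have hktm : k ≤ t - m := by simpa [Nat.lt_succ_iff] using hk
      rw [show l + k - l = k by omega, show t - (l + k) = (m - l) + (t - m - k) by omega,
        pow_add, pow_add]
      ring
    rw [sum_congr rfl step, ← mul_sum]
    have hb : (x + (1 - x)) ^ (t - m) =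
        ∑ k ∈ range (t - m + 1), x ^ k * (1 - x) ^ (t - m - k) * ((t - m).choose k : ℝ) :=
      add_pow x (1 - x) (t - m)
    rw [← hb, show x + (1 - x) = 1 by ring, one_pow, mul_one]
  rw [sum_congr rfl (fun l hl => by rw [← mul_sum, hinner l hl]), key m x]
  refine sum_congr rfl fun l hl => ?_
  rw [show x - 1 = (-1) * (1 - x) by ring, mul_pow]
  ring
end
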